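/- arXiv:2601.17456 — 9 statements merged into one kernel-verified Lean document; each statement's English description precedes it below -/
import Mathlib

section
/- If (A, *, R) is an associative Rota-Baxter algebra of weight 0, then defining a ≺ b := a * R(b) and a ≻ b := R(a) * b makes (A, ≺, ≻) a dendriform algebra. -/
/-- If `(A, *, R)` is an associative Rota-Baxter algebra of weight 0,
then `a ≺ b := a * R b` and `a ≻ b := R a * b` make `A` a dendriform algebra. -/
theorem stmt0 (k A : Type*) [Field k] [AddCommGroup A] [Module k A]
    (m : A →ₗ[k] A →ₗ[k] A)
    (hassoc : ∀ a b c : A, m (m a b) c = m a (m b c))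
    (R : A →ₗ[k] A)
    (hRB : ∀ a b : A, m (R a) (R b) = R (m (R a) b + m a (R b))) :
    (∀ a b c : A, m (m a (R b)) (R c)
        = m a (R (m b (R c))) + m a (R (m (R b) c))) ∧
    (∀ a b c : A, m (m (R a) b) (R c) = m (R a) (m b (R c))) ∧
    (∀ a b c : A, m (R a) (m (R b) c)
        = m (R (m a (R b))) c + m (R (m (R a) b)) c) := by
  refine ⟨fun a b c => ?_, fun a b c => hassoc _ _ _, fun a b c => ?_⟩
  · rw [hassoc, hRB, map_add, map_add, add_comm]
  · rw [← hassoc, hRB, map_add, map_add, add_comm, LinearMap.add_apply]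
end

section
/- If (D, ≺, ≻) is a dendriform algebra and (B, ·) is a perm algebra, then the operation (d1 ⊗ b1) * (d2 ⊗ b2) := (d1 ≻ d2) ⊗ (b1·b2) + (d1 ≺ d2) ⊗ (b2·b1), extended bilinearly, makes D ⊗ B an associative algebra. -/
open TensorProduct

/-- the tensor product of a dendriform algebra with a perm algebra,
with `(d1⊗b1)*(d2⊗b2) = (d1≻d2)⊗(b1·b2) + (d1≺d2)⊗(b2·b1)` extended bilinearly,
is an associative algebra. -/
theorem stmt3 (k D B : Type*) [Field k]
    [AddCommGroup D] [Module k D] [AddCommGroup B] [Module k B]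
    (prec succ : D →ₗ[k] D →ₗ[k] D)
    (h1 : ∀ a b c : D, prec (prec a b) c = prec a (prec b c) + prec a (succ b c))
    (h2 : ∀ a b c : D, prec (succ a b) c = succ a (prec b c))
    (h3 : ∀ a b c : D, succ a (succ b c) = succ (prec a b) c + succ (succ a b) c)
    (pm : B →ₗ[k] B →ₗ[k] B)
    (hp1 : ∀ a b c : B, pm a (pm b c) = pm (pm a b) c)
    (hp2 : ∀ a b c : B, pm (pm a b) c = pm (pm b a) c)
    (star : (D ⊗[k] B) →ₗ[k] (D ⊗[k] B) →ₗ[k] (D ⊗[k] B))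
    (hstar : ∀ (d1 d2 : D) (b1 b2 : B),
      star (d1 ⊗ₜ[k] b1) (d2 ⊗ₜ[k] b2)
        = (succ d1 d2) ⊗ₜ[k] (pm b1 b2) + (prec d1 d2) ⊗ₜ[k] (pm b2 b1)) :
    ∀ u v w : D ⊗[k] B, star (star u v) w = star u (star v w) := by
  intro u v w
  induction u using TensorProduct.induction_on with
  | zero => simp
  | add x y hx hy => simp [map_add, LinearMap.add_apply, hx, hy]
  | tmul d1 b1 =>
    induction v using TensorProduct.induction_on with
    | zero => simp
    | add x y hx hy => simp [map_add, LinearMap.add_apply, hx, hy]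
    | tmul d2 b2 =>
      induction w using TensorProduct.induction_on with
      | zero => simp
      | add x y hx hy => simp [map_add, hx, hy]
      | tmul d3 b3 =>
        rw [hstar, hstar, map_add, LinearMap.add_apply, map_add, hstar, hstar,
          hstar, hstar]
        rw [h1, h2, h3, add_tmul, add_tmul]
        have hps : ∀ a b c : B, pm a (pm b c) = pm b (pm a c) := by
          intro a b c; rw [hp1, hp2, ← hp1]
        simp only [← hp1]
        rw [hps b3 b1 b2, hps b2 b1 b3, hps b3 b2 b1]
        abel
end

section
/- If (A, ⋄) is a pre-Lie algebra and (B, ·) is a perm algebra, then the bracket [a1 ⊗ b1, a2 ⊗ b2] := (a1 ⋄ a2) ⊗ (b1·b2) − (a2 ⋄ a1) ⊗ (b2·b1), extended bilinearly, makes A ⊗ B a Lie algebra. -/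
open TensorProduct

/-- the tensor product of a pre-Lie algebra with a perm algebra,
with `[a1⊗b1, a2⊗b2] = (a1⋄a2)⊗(b1·b2) − (a2⋄a1)⊗(b2·b1)` extended bilinearly,
is a Lie algebra. -/
theorem stmt4 (k A B : Type*) [Field k]
    [AddCommGroup A] [Module k A] [AddCommGroup B] [Module k B]
    (diam : A →ₗ[k] A →ₗ[k] A)
    (hpl : ∀ a b c : A,
      diam a (diam b c) - diam (diam a b) c = diam b (diam a c) - diam (diam b a) c)
    (pm : B →ₗ[k] B →ₗ[k] B)
    (hp1 : ∀ a b c : B, pm a (pm b c) = pm (pm a b) c)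
    (hp2 : ∀ a b c : B, pm (pm a b) c = pm (pm b a) c)
    (br : (A ⊗[k] B) →ₗ[k] (A ⊗[k] B) →ₗ[k] (A ⊗[k] B))
    (hbr : ∀ (a1 a2 : A) (b1 b2 : B),
      br (a1 ⊗ₜ[k] b1) (a2 ⊗ₜ[k] b2)
        = (diam a1 a2) ⊗ₜ[k] (pm b1 b2) - (diam a2 a1) ⊗ₜ[k] (pm b2 b1)) :
    (∀ u : A ⊗[k] B, br u u = 0) ∧
    (∀ u v w : A ⊗[k] B, br (br u v) w + br (br v w) u + br (br w u) v = 0) := by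
  have anti : ∀ u v : A ⊗[k] B, br u v = - br v u := by
    have h : br + br.flip = 0 := by
      apply TensorProduct.ext'
      intro a1 b1
      apply TensorProduct.ext'
      intro a2 b2
      simp only [LinearMap.add_apply, LinearMap.flip_apply, LinearMap.zero_apply, hbr]
      abel
    intro u v
    have h2 := LinearMap.congr_fun (LinearMap.congr_fun h u) v
    simp only [LinearMap.add_apply, LinearMap.flip_apply, LinearMap.zero_apply] at h2
    exact eq_neg_of_add_eq_zero_left h2
  constructor
  · intro u
    induction u using TensorProduct.induction_on with
    | zero => simp
    | tmul a b => rw [hbr, sub_self]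
    | add x y hx hy =>
      simp only [map_add, LinearMap.add_apply]
      rw [hx, hy, anti x y]
      abel
  · intro u v w
    induction u using TensorProduct.induction_on with
    | zero => simp
    | add x y hx hy =>
      have hsum := congrArg₂ (· + ·) hx hy
      simp only [add_zero] at hsum
      simp only [map_add, LinearMap.add_apply]
      rw [← hsum]; abel
    | tmul a1 b1 =>
      induction v using TensorProduct.induction_on with
      | zero => simp
      | add x y hx hy =>
        have hsum := congrArg₂ (· + ·) hx hy
        simp only [add_zero] at hsum
        simp only [map_add, LinearMap.add_apply]
        rw [← hsum]; abel
      | tmul a2 b2 =>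
        induction w using TensorProduct.induction_on with
        | zero => simp
        | add x y hx hy =>
          have hsum := congrArg₂ (· + ·) hx hy
          simp only [add_zero] at hsum
          simp only [map_add, LinearMap.add_apply]
          rw [← hsum]; abel
        | tmul a3 b3 =>
          simp only [hbr, map_sub, LinearMap.sub_apply]
          simp only [hp1]
          simp only [hp2 b2 b1, hp2 b3 b1, hp2 b3 b2]
          have h12 := congrArg (· ⊗ₜ[k] pm (pm b1 b2) b3)
            (sub_eq_zero.mpr (hpl a1 a2 a3).symm)
          have h13 := congrArg (· ⊗ₜ[k] pm (pm b1 b3) b2)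
            (sub_eq_zero.mpr (hpl a3 a1 a2).symm)
          have h23 := congrArg (· ⊗ₜ[k] pm (pm b2 b3) b1)
            (sub_eq_zero.mpr (hpl a2 a3 a1).symm)
          simp only [sub_tmul, zero_tmul] at h12 h13 h23
          have hsum := congrArg₂ (· + ·) (congrArg₂ (· + ·) h12 h13) h23
          simp only [add_zero] at hsum
          rw [← hsum]; abel
end

section
/- Let (D, ≺, ≻) be a dendriform algebra and (B, ·) a perm algebra. Then the Lie algebra obtained by taking the commutator of the induced associative algebra structure on D ⊗ B (given by (d1⊗b1)*(d2⊗b2) = (d1≻d2)⊗(b1b2) + (d1≺d2)⊗(b2b1)) coincides with the Lie algebra obtained by first forming the induced pre-Lie algebra (D, ⋄) with d1⋄d2 = d1≻d2 − d2≺d1 and then forming the bracket [a1⊗b1, a2⊗b2] = (a1⋄a2)⊗(b1b2) − (a2⋄a1)⊗(b2b1) on D ⊗ B. -/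
open TensorProduct

/-- for a dendriform algebra `D` and a perm algebra `B`, the commutator
Lie bracket of the induced associative product on `D ⊗ B` coincides with the Lie
bracket induced on `D ⊗ B` by the induced pre-Lie product `d1⋄d2 = d1≻d2 − d2≺d1`. -/
theorem stmt5 (k D B : Type*) [Field k]
    [AddCommGroup D] [Module k D] [AddCommGroup B] [Module k B]
    (prec succ : D →ₗ[k] D →ₗ[k] D)
    (h1 : ∀ a b c : D, prec (prec a b) c = prec a (prec b c) + prec a (succ b c))
    (h2 : ∀ a b c : D, prec (succ a b) c = succ a (prec b c))
    (h3 : ∀ a b c : D, succ a (succ b c) = succ (prec a b) c + succ (succ a b) c)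
    (pm : B →ₗ[k] B →ₗ[k] B)
    (hp1 : ∀ a b c : B, pm a (pm b c) = pm (pm a b) c)
    (hp2 : ∀ a b c : B, pm (pm a b) c = pm (pm b a) c)
    (star : (D ⊗[k] B) →ₗ[k] (D ⊗[k] B) →ₗ[k] (D ⊗[k] B))
    (hstar : ∀ (d1 d2 : D) (b1 b2 : B),
      star (d1 ⊗ₜ[k] b1) (d2 ⊗ₜ[k] b2)
        = (succ d1 d2) ⊗ₜ[k] (pm b1 b2) + (prec d1 d2) ⊗ₜ[k] (pm b2 b1))
    (br : (D ⊗[k] B) →ₗ[k] (D ⊗[k] B) →ₗ[k] (D ⊗[k] B))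
    (hbr : ∀ (d1 d2 : D) (b1 b2 : B),
      br (d1 ⊗ₜ[k] b1) (d2 ⊗ₜ[k] b2)
        = (succ d1 d2 - prec d2 d1) ⊗ₜ[k] (pm b1 b2)
          - (succ d2 d1 - prec d1 d2) ⊗ₜ[k] (pm b2 b1)) :
    ∀ u v : D ⊗[k] B, star u v - star v u = br u v := by
  intro u v
  induction u using TensorProduct.induction_on with
  | zero => simp
  | tmul d1 b1 =>
    induction v using TensorProduct.induction_on with
    | zero => simp
    | tmul d2 b2 =>
      rw [hstar, hstar, hbr, TensorProduct.sub_tmul, TensorProduct.sub_tmul]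
      abel
    | add x y hx hy => simp only [map_add, LinearMap.add_apply, ← hx, ← hy]; abel
  | add x y hx hy => simp only [map_add, LinearMap.add_apply, ← hx, ← hy]; abel
end

section
/- Let (B, ·, ω) be a finite-dimensional quadratic perm algebra with basis {e_1,...,e_n} and dual basis {f_1,...,f_n} with respect to ω. Then for any fixed p, Σ_j (e_p·e_j) ⊗ f_j = Σ_j (e_j·e_p) ⊗ f_j + Σ_j e_j ⊗ (f_j·e_p). -/
open TensorProduct

/-- in a finite-dimensional quadratic perm algebra with basis `e` and
ω-dual basis `f`, for every `p`,
`Σ_j (e_p·e_j) ⊗ f_j = Σ_j (e_j·e_p) ⊗ f_j + Σ_j e_j ⊗ (f_j·e_p)`. -/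
theorem stmt9 (k B : Type*) [Field k] [AddCommGroup B] [Module k B]
    (pm : B →ₗ[k] B →ₗ[k] B)
    (hp1 : ∀ a b c : B, pm a (pm b c) = pm (pm a b) c)
    (hp2 : ∀ a b c : B, pm (pm a b) c = pm (pm b a) c)
    (ω : B →ₗ[k] B →ₗ[k] k)
    (hanti : ∀ a b : B, ω a b = - ω b a)
    (hinv : ∀ a b c : B, ω (pm a b) c = ω a (pm b c - pm c b))
    (hnd : ∀ b : B, (∀ b' : B, ω b b' = 0) → b = 0)
    (n : ℕ) (e : Module.Basis (Fin n) k B) (f : Fin n → B)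
    (hdual : ∀ i j, ω (e i) (f j) = if i = j then 1 else 0) :
    ∀ p : Fin n,
      (∑ j, pm (e p) (e j) ⊗ₜ[k] f j)
        = (∑ j, pm (e j) (e p) ⊗ₜ[k] f j) + ∑ j, e j ⊗ₜ[k] pm (f j) (e p) := by
  intro p
  -- derived invariance: ω (a·b) c = ω b (a·c)
  have L0 : ∀ a b c : B, ω (pm a b) c = ω b (pm a c) := by
    intro a b c
    have h1 := hinv a b c
    have h2 := hinv a c b
    have h3 := hanti b (pm a c)
    have h4 := hanti (pm a c) b
    simp only [map_sub] at h1 h2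
    linear_combination h1 + h2 - h3
  -- coefficients in basis e are given by pairing with f
  have hcoef : ∀ (x : B) (i : Fin n), ω x (f i) = e.repr x i := by
    intro x i
    conv_lhs => rw [← e.sum_repr x]
    simp [-Module.Basis.sum_repr, map_sum, map_smul, LinearMap.sum_apply, LinearMap.smul_apply, hdual,
      smul_eq_mul, mul_ite, mul_one, mul_zero, Finset.sum_ite_eq']
  have L1 : ∀ x : B, ∑ i, ω x (f i) • e i = x := by
    intro x
    calc ∑ i, ω x (f i) • e i = ∑ i, e.repr x i • e i := by
          exact Finset.sum_congr rfl fun i _ => by rw [hcoef]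
      _ = x := e.sum_repr x
  -- completeness of f: every y is ∑ ω(e_i, y) • f_i
  have L2 : ∀ y : B, ∑ i, ω (e i) y • f i = y := by
    intro y
    have hz : ∀ i, ω (e i) (y - ∑ j, ω (e j) y • f j) = 0 := by
      intro i
      simp [map_sub, map_sum, map_smul, hdual, smul_eq_mul, mul_ite, mul_one, mul_zero,
        Finset.sum_ite_eq']
    have hall : ∀ b' : B, ω (y - ∑ j, ω (e j) y • f j) b' = 0 := by
      intro b'
      have hb : ω b' (y - ∑ j, ω (e j) y • f j) = 0 := by
        conv_lhs => rw [← e.sum_repr b']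
        simp [-Module.Basis.sum_repr, map_sum, LinearMap.sum_apply, map_smul, LinearMap.smul_apply, hz,
          smul_eq_mul, mul_zero, Finset.sum_const_zero]
      rw [hanti, hb, neg_zero]
    exact (sub_eq_zero.mp (hnd _ hall)).symm
  -- scalar identity
  have key : ∀ i j, ω (pm (e p) (e j)) (f i)
      = ω (pm (e j) (e p)) (f i) + ω (e j) (pm (f i) (e p)) := by
    intro i j
    have h1 := hinv (e p) (e j) (f i)
    have h2 := L0 (e j) (e p) (f i)
    have h3 := L0 (f i) (e p) (e j)
    have h4 := hanti (e j) (pm (f i) (e p))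
    simp only [map_sub] at h1
    linear_combination h1 - h2 + h3 - h4
  have hLHS : (∑ j, pm (e p) (e j) ⊗ₜ[k] f j)
      = ∑ j, ∑ i, ω (pm (e p) (e j)) (f i) • (e i ⊗ₜ[k] f j) := by
    refine Finset.sum_congr rfl fun j _ => ?_
    conv_lhs => rw [← L1 (pm (e p) (e j))]
    rw [TensorProduct.sum_tmul]
    exact Finset.sum_congr rfl fun i _ => by rw [TensorProduct.smul_tmul']
  have hT1 : (∑ j, pm (e j) (e p) ⊗ₜ[k] f j)
      = ∑ j, ∑ i, ω (pm (e j) (e p)) (f i) • (e i ⊗ₜ[k] f j) := by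
    refine Finset.sum_congr rfl fun j _ => ?_
    conv_lhs => rw [← L1 (pm (e j) (e p))]
    rw [TensorProduct.sum_tmul]
    exact Finset.sum_congr rfl fun i _ => by rw [TensorProduct.smul_tmul']
  have hT2 : (∑ j, e j ⊗ₜ[k] pm (f j) (e p))
      = ∑ j, ∑ i, ω (e j) (pm (f i) (e p)) • (e i ⊗ₜ[k] f j) := by
    calc (∑ j, e j ⊗ₜ[k] pm (f j) (e p))
        = ∑ j, ∑ i, ω (e i) (pm (f j) (e p)) • (e j ⊗ₜ[k] f i) := by
          refine Finset.sum_congr rfl fun j _ => ?_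
          conv_lhs => rw [← L2 (pm (f j) (e p))]
          rw [TensorProduct.tmul_sum]
          exact Finset.sum_congr rfl fun i _ => by rw [TensorProduct.tmul_smul]
      _ = ∑ j, ∑ i, ω (e j) (pm (f i) (e p)) • (e i ⊗ₜ[k] f j) := Finset.sum_comm
  rw [hLHS, hT1, hT2, ← Finset.sum_add_distrib]
  refine Finset.sum_congr rfl fun j _ => ?_
  rw [← Finset.sum_add_distrib]
  refine Finset.sum_congr rfl fun i _ => ?_
  rw [← add_smul, key]
end

section
/- Let (A, ⋄) be a pre-Lie algebra, (B, ·, ω) a finite-dimensional quadratic perm algebra with basis {e_j} and ω-dual basis {f_j}, and (A⊗B, [−,−]) the induced Lie algebra with [a1⊗b1, a2⊗b2] = (a1⋄a2)⊗(b1b2) − (a2⋄a1)⊗(b2b1). If r = Σ_i x_i ⊗ y_i ∈ A⊗A is a symmetric solution of the pre-Lie Yang-Baxter equation in (A, ⋄), then r̂ := Σ_{i,j} (x_i ⊗ e_j) ⊗ (y_i ⊗ f_j) is a skew-symmetric solution of the classical Yang-Baxter equation in (A⊗B, [−,−]). -/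
open TensorProduct

set_option maxHeartbeats 4000000

noncomputable def pr2 {k M N : Type*} [CommRing k] [AddCommGroup M] [Module k M]
    [AddCommGroup N] [Module k N] (φ : M →ₗ[k] k) (ψ : N →ₗ[k] k) : M ⊗[k] N →ₗ[k] k :=
  TensorProduct.lift ((LinearMap.mul k k).compl₁₂ φ ψ)

@[simp] lemma pr2_tmul {k M N : Type*} [CommRing k] [AddCommGroup M] [Module k M]
    [AddCommGroup N] [Module k N] (φ : M →ₗ[k] k) (ψ : N →ₗ[k] k) (u : M) (v : N) :
    pr2 φ ψ (u ⊗ₜ[k] v) = φ u * ψ v := by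
  simp [pr2]

/-- a symmetric solution of the pre-Lie Yang-Baxter equation in a
pre-Lie algebra `(A,⋄)` induces, via a quadratic perm algebra `(B,·,ω)` with basis
`e` and ω-dual basis `f`, a skew-symmetric solution
`r̂ = Σ_{i,j} (x_i⊗e_j)⊗(y_i⊗f_j)` of the classical Yang-Baxter equation in the
induced Lie algebra `(A⊗B, [−,−])`. -/
theorem stmt10 (k A B : Type*) [Field k]
    [AddCommGroup A] [Module k A] [AddCommGroup B] [Module k B]
    (diam : A →ₗ[k] A →ₗ[k] A)
    (hpl : ∀ a b c : A,
      diam a (diam b c) - diam (diam a b) c = diam b (diam a c) - diam (diam b a) c)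
    (pm : B →ₗ[k] B →ₗ[k] B)
    (hp1 : ∀ a b c : B, pm a (pm b c) = pm (pm a b) c)
    (hp2 : ∀ a b c : B, pm (pm a b) c = pm (pm b a) c)
    (ω : B →ₗ[k] B →ₗ[k] k)
    (hanti : ∀ a b : B, ω a b = - ω b a)
    (hinv : ∀ a b c : B, ω (pm a b) c = ω a (pm b c - pm c b))
    (m : ℕ) (e : Module.Basis (Fin m) k B) (f : Fin m → B)
    (hdual : ∀ i j, ω (e i) (f j) = if i = j then 1 else 0)
    (br : (A ⊗[k] B) →ₗ[k] (A ⊗[k] B) →ₗ[k] (A ⊗[k] B))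
    (hbr : ∀ (a1 a2 : A) (b1 b2 : B),
      br (a1 ⊗ₜ[k] b1) (a2 ⊗ₜ[k] b2)
        = (diam a1 a2) ⊗ₜ[k] (pm b1 b2) - (diam a2 a1) ⊗ₜ[k] (pm b2 b1))
    (n : ℕ) (x y : Fin n → A)
    (hsymm : (∑ i, x i ⊗ₜ[k] y i) = ∑ i, y i ⊗ₜ[k] x i)
    (hPLYBE : (∑ i, ∑ j,
        (diam (x i) (x j) ⊗ₜ[k] (y j ⊗ₜ[k] y i)
        + x j ⊗ₜ[k] (diam (x i) (y j) ⊗ₜ[k] y i)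
        + diam (y i) (x j) ⊗ₜ[k] (x i ⊗ₜ[k] y j)
        + x j ⊗ₜ[k] (x i ⊗ₜ[k] diam (y i) (y j))
        - y j ⊗ₜ[k] (diam (x i) (x j) ⊗ₜ[k] y i)
        - x i ⊗ₜ[k] (diam (y i) (x j) ⊗ₜ[k] y j)
        - diam (x i) (y j) ⊗ₜ[k] (x j ⊗ₜ[k] y i)
        - x i ⊗ₜ[k] (x j ⊗ₜ[k] diam (y i) (y j)))) = 0) :
    ((∑ i, ∑ j, (x i ⊗ₜ[k] e j) ⊗ₜ[k] (y i ⊗ₜ[k] f j))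
        = - ∑ i, ∑ j, (y i ⊗ₜ[k] f j) ⊗ₜ[k] (x i ⊗ₜ[k] e j)) ∧
    (∑ i, ∑ i', ∑ j, ∑ j',
        (br (x i ⊗ₜ[k] e j) (x i' ⊗ₜ[k] e j')
            ⊗ₜ[k] ((y i ⊗ₜ[k] f j) ⊗ₜ[k] (y i' ⊗ₜ[k] f j'))
        + (x i ⊗ₜ[k] e j)
            ⊗ₜ[k] ((x i' ⊗ₜ[k] e j') ⊗ₜ[k] br (y i ⊗ₜ[k] f j) (y i' ⊗ₜ[k] f j'))
        + (x i ⊗ₜ[k] e j)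
            ⊗ₜ[k] (br (y i ⊗ₜ[k] f j) (x i' ⊗ₜ[k] e j') ⊗ₜ[k] (y i' ⊗ₜ[k] f j'))))
      = 0 := by
  classical
  have hrep : ∀ (b : B) (j : Fin m), ω b (f j) = e.repr b j := by
    intro b j
    conv_lhs => rw [← e.sum_repr b]
    simp [-Module.Basis.sum_repr, map_sum, hdual, mul_ite, Finset.sum_ite_eq']
  have L1 : ∀ b : B, (∑ j, ω b (f j) • e j) = b := by
    intro b
    simp only [hrep]
    exact e.sum_repr b
  have hz : ∀ c : B, (∀ j, ω c (f j) = 0) → c = 0 := by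
    intro c h
    have h2 := (L1 c).symm
    simpa [h] using h2
  have L2 : ∀ b : B, (∑ j, ω (e j) b • f j) = b := by
    intro b
    have h1 : ∀ i, ω (e i) ((∑ j, ω (e j) b • f j) - b) = 0 := by
      intro i
      simp [map_sub, map_sum, map_smul, hdual, smul_eq_mul, mul_ite, Finset.sum_ite_eq]
    have h2 : ∀ c, ω c ((∑ j, ω (e j) b • f j) - b) = 0 := by
      intro c
      conv_lhs => rw [← e.sum_repr c]
      simp [-Module.Basis.sum_repr, map_sum, h1]
    have h3 : ∀ j, ω ((∑ j, ω (e j) b • f j) - b) (f j) = 0 := by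
      intro j
      rw [hanti]
      simp [h2]
    have h4 := hz _ h3
    exact sub_eq_zero.mp h4
  have sA : ∀ (φ : B →ₗ[k] k) (b : B), (∑ j, ω b (f j) * φ (e j)) = φ b := by
    intro φ b
    have := congrArg φ (L1 b)
    simpa [map_sum, map_smul, smul_eq_mul] using this
  have sA' : ∀ (φ : B →ₗ[k] k) (b : B), (∑ j, ω (f j) b * φ (e j)) = - φ b := by
    intro φ b
    calc (∑ j, ω (f j) b * φ (e j)) = ∑ j, -(ω b (f j) * φ (e j)) := by
          refine Finset.sum_congr rfl fun j _ => ?_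
          rw [hanti]; ring
      _ = -(∑ j, ω b (f j) * φ (e j)) := by rw [Finset.sum_neg_distrib]
      _ = - φ b := by rw [sA]
  have sB : ∀ (φ : B →ₗ[k] k) (b : B), (∑ j, ω (e j) b * φ (f j)) = φ b := by
    intro φ b
    have := congrArg φ (L2 b)
    simpa [map_sum, map_smul, smul_eq_mul] using this
  have K : ∀ u v w : B, ω (pm u v) w = - ω (pm u w) v := by
    intro u v w
    rw [hinv, hinv, map_sub, map_sub]
    ring
  -- ext3
  have ext3 : ∀ S : B ⊗[k] (B ⊗[k] B),
      (∀ a b c : Fin m, pr2 (ω.flip (f a)) (pr2 (ω.flip (f b)) (ω.flip (f c))) S = 0) → S = 0 := by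
    intro S hS
    set T := e.tensorProduct (e.tensorProduct e) with hT
    have hfun : ∀ (a b c : Fin m),
        (pr2 (ω.flip (f a)) (pr2 (ω.flip (f b)) (ω.flip (f c)))) = T.coord (a, (b, c)) := by
      intro a b c
      apply T.ext
      rintro ⟨p, q, r⟩
      simp only [hT, Module.Basis.tensorProduct_apply, pr2_tmul, LinearMap.flip_apply,
        Module.Basis.coord_apply, Module.Basis.repr_self, Finsupp.single_apply, hdual]
      by_cases h1 : p = a <;> by_cases h2 : q = b <;> by_cases h3 : r = c <;>
        simp [h1, h2, h3, Prod.ext_iff]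
    have hco : ∀ pp, T.repr S pp = 0 := by
      rintro ⟨a, b, c⟩
      have h := hS a b c
      rw [hfun] at h
      simpa [Module.Basis.coord_apply] using h
    have h0 : T.repr S = 0 := by
      ext pp
      simpa using hco pp
    exact (LinearEquiv.map_eq_zero_iff T.repr).mp h0
  -- V lemmas
  have V1 : ∀ b1 b2 b3 : B,
      (∑ j, ∑ j', ω (pm (e j) (e j')) b1 * (ω (f j) b2 * ω (f j') b3)) = ω (pm b2 b3) b1 := by
    intro b1 b2 b3
    have step : ∀ j : Fin m,
        (∑ j', ω (pm (e j) (e j')) b1 * (ω (f j) b2 * ω (f j') b3))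
          = ω (f j) b2 * (-(((ω.flip b1).comp (pm.flip b3)) (e j))) := by
      intro j
      have h := sA' ((ω.flip b1).comp (pm (e j))) b3
      calc (∑ j', ω (pm (e j) (e j')) b1 * (ω (f j) b2 * ω (f j') b3))
          = ω (f j) b2 * (∑ j', ω (f j') b3 * ((ω.flip b1).comp (pm (e j))) (e j')) := by
            rw [Finset.mul_sum]
            refine Finset.sum_congr rfl fun j' _ => ?_
            simp only [LinearMap.comp_apply, LinearMap.flip_apply]
            try ring
        _ = ω (f j) b2 * (-(((ω.flip b1).comp (pm (e j))) b3)) := by rw [h]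
        _ = ω (f j) b2 * (-(((ω.flip b1).comp (pm.flip b3)) (e j))) := by
            simp only [LinearMap.comp_apply, LinearMap.flip_apply]
    calc (∑ j, ∑ j', ω (pm (e j) (e j')) b1 * (ω (f j) b2 * ω (f j') b3))
        = ∑ j, ω (f j) b2 * (-(((ω.flip b1).comp (pm.flip b3)) (e j))) :=
          Finset.sum_congr rfl fun j _ => step j
      _ = -(∑ j, ω (f j) b2 * ((ω.flip b1).comp (pm.flip b3)) (e j)) := by
          rw [← Finset.sum_neg_distrib]
          exact Finset.sum_congr rfl fun j _ => by ring
      _ = ω (pm b2 b3) b1 := by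
          rw [sA' ((ω.flip b1).comp (pm.flip b3)) b2]
          simp only [LinearMap.comp_apply, LinearMap.flip_apply, neg_neg]
  have V2 : ∀ b1 b2 b3 : B,
      (∑ j, ∑ j', ω (pm (e j') (e j)) b1 * (ω (f j) b2 * ω (f j') b3)) = ω (pm b3 b2) b1 := by
    intro b1 b2 b3
    have step : ∀ j : Fin m,
        (∑ j', ω (pm (e j') (e j)) b1 * (ω (f j) b2 * ω (f j') b3))
          = ω (f j) b2 * (-(((ω.flip b1).comp (pm b3)) (e j))) := by
      intro j
      have h := sA' ((ω.flip b1).comp (pm.flip (e j))) b3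
      calc (∑ j', ω (pm (e j') (e j)) b1 * (ω (f j) b2 * ω (f j') b3))
          = ω (f j) b2 * (∑ j', ω (f j') b3 * ((ω.flip b1).comp (pm.flip (e j))) (e j')) := by
            rw [Finset.mul_sum]
            refine Finset.sum_congr rfl fun j' _ => ?_
            simp only [LinearMap.comp_apply, LinearMap.flip_apply]
            try ring
        _ = ω (f j) b2 * (-(((ω.flip b1).comp (pm.flip (e j))) b3)) := by rw [h]
        _ = ω (f j) b2 * (-(((ω.flip b1).comp (pm b3)) (e j))) := by
            simp only [LinearMap.comp_apply, LinearMap.flip_apply]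
    calc (∑ j, ∑ j', ω (pm (e j') (e j)) b1 * (ω (f j) b2 * ω (f j') b3))
        = ∑ j, ω (f j) b2 * (-(((ω.flip b1).comp (pm b3)) (e j))) :=
          Finset.sum_congr rfl fun j _ => step j
      _ = -(∑ j, ω (f j) b2 * ((ω.flip b1).comp (pm b3)) (e j)) := by
          rw [← Finset.sum_neg_distrib]
          exact Finset.sum_congr rfl fun j _ => by ring
      _ = ω (pm b3 b2) b1 := by
          rw [sA' ((ω.flip b1).comp (pm b3)) b2]
          simp only [LinearMap.comp_apply, LinearMap.flip_apply, neg_neg]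
  have V3 : ∀ b1 b2 b3 : B,
      (∑ j, ∑ j', ω (e j) b1 * (ω (e j') b2 * ω (pm (f j) (f j')) b3)) = ω (pm b1 b2) b3 := by
    intro b1 b2 b3
    have step : ∀ j : Fin m,
        (∑ j', ω (e j) b1 * (ω (e j') b2 * ω (pm (f j) (f j')) b3))
          = ω (e j) b1 * (((ω.flip b3).comp (pm.flip b2)) (f j)) := by
      intro j
      have h := sB ((ω.flip b3).comp (pm (f j))) b2
      calc (∑ j', ω (e j) b1 * (ω (e j') b2 * ω (pm (f j) (f j')) b3))
          = ω (e j) b1 * (∑ j', ω (e j') b2 * ((ω.flip b3).comp (pm (f j))) (f j')) := by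
            rw [Finset.mul_sum]
            refine Finset.sum_congr rfl fun j' _ => ?_
            simp only [LinearMap.comp_apply, LinearMap.flip_apply]
            try ring
        _ = ω (e j) b1 * (((ω.flip b3).comp (pm (f j))) b2) := by rw [h]
        _ = ω (e j) b1 * (((ω.flip b3).comp (pm.flip b2)) (f j)) := by
            simp only [LinearMap.comp_apply, LinearMap.flip_apply]
    calc (∑ j, ∑ j', ω (e j) b1 * (ω (e j') b2 * ω (pm (f j) (f j')) b3))
        = ∑ j, ω (e j) b1 * (((ω.flip b3).comp (pm.flip b2)) (f j)) :=
          Finset.sum_congr rfl fun j _ => step j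
      _ = ω (pm b1 b2) b3 := by
          rw [sB ((ω.flip b3).comp (pm.flip b2)) b1]
          simp only [LinearMap.comp_apply, LinearMap.flip_apply]
  have V4 : ∀ b1 b2 b3 : B,
      (∑ j, ∑ j', ω (e j) b1 * (ω (e j') b2 * ω (pm (f j') (f j)) b3)) = ω (pm b2 b1) b3 := by
    intro b1 b2 b3
    have step : ∀ j : Fin m,
        (∑ j', ω (e j) b1 * (ω (e j') b2 * ω (pm (f j') (f j)) b3))
          = ω (e j) b1 * (((ω.flip b3).comp (pm b2)) (f j)) := by
      intro j
      have h := sB ((ω.flip b3).comp (pm.flip (f j))) b2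
      calc (∑ j', ω (e j) b1 * (ω (e j') b2 * ω (pm (f j') (f j)) b3))
          = ω (e j) b1 * (∑ j', ω (e j') b2 * ((ω.flip b3).comp (pm.flip (f j))) (f j')) := by
            rw [Finset.mul_sum]
            refine Finset.sum_congr rfl fun j' _ => ?_
            simp only [LinearMap.comp_apply, LinearMap.flip_apply]
            try ring
        _ = ω (e j) b1 * (((ω.flip b3).comp (pm.flip (f j))) b2) := by rw [h]
        _ = ω (e j) b1 * (((ω.flip b3).comp (pm b2)) (f j)) := by
            simp only [LinearMap.comp_apply, LinearMap.flip_apply]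
    calc (∑ j, ∑ j', ω (e j) b1 * (ω (e j') b2 * ω (pm (f j') (f j)) b3))
        = ∑ j, ω (e j) b1 * (((ω.flip b3).comp (pm b2)) (f j)) :=
          Finset.sum_congr rfl fun j _ => step j
      _ = ω (pm b2 b1) b3 := by
          rw [sB ((ω.flip b3).comp (pm b2)) b1]
          simp only [LinearMap.comp_apply, LinearMap.flip_apply]
  have V5 : ∀ b1 b2 b3 : B,
      (∑ j, ∑ j', ω (e j) b1 * (ω (pm (f j) (e j')) b2 * ω (f j') b3)) = -(ω (pm b1 b3) b2) := by
    intro b1 b2 b3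
    have step : ∀ j : Fin m,
        (∑ j', ω (e j) b1 * (ω (pm (f j) (e j')) b2 * ω (f j') b3))
          = -(ω (e j) b1 * (((ω.flip b2).comp (pm.flip b3)) (f j))) := by
      intro j
      have h := sA' ((ω.flip b2).comp (pm (f j))) b3
      calc (∑ j', ω (e j) b1 * (ω (pm (f j) (e j')) b2 * ω (f j') b3))
          = ω (e j) b1 * (∑ j', ω (f j') b3 * ((ω.flip b2).comp (pm (f j))) (e j')) := by
            rw [Finset.mul_sum]
            refine Finset.sum_congr rfl fun j' _ => ?_
            simp only [LinearMap.comp_apply, LinearMap.flip_apply]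
            try ring
        _ = ω (e j) b1 * (-(((ω.flip b2).comp (pm (f j))) b3)) := by rw [h]
        _ = -(ω (e j) b1 * (((ω.flip b2).comp (pm.flip b3)) (f j))) := by
            simp only [LinearMap.comp_apply, LinearMap.flip_apply]
            try ring
    calc (∑ j, ∑ j', ω (e j) b1 * (ω (pm (f j) (e j')) b2 * ω (f j') b3))
        = ∑ j, -(ω (e j) b1 * (((ω.flip b2).comp (pm.flip b3)) (f j))) :=
          Finset.sum_congr rfl fun j _ => step j
      _ = -(∑ j, ω (e j) b1 * (((ω.flip b2).comp (pm.flip b3)) (f j))) := by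
          rw [Finset.sum_neg_distrib]
      _ = -(ω (pm b1 b3) b2) := by
          rw [sB ((ω.flip b2).comp (pm.flip b3)) b1]
          simp only [LinearMap.comp_apply, LinearMap.flip_apply]
  have V6 : ∀ b1 b2 b3 : B,
      (∑ j, ∑ j', ω (e j) b1 * (ω (pm (e j') (f j)) b2 * ω (f j') b3)) = -(ω (pm b3 b1) b2) := by
    intro b1 b2 b3
    have step : ∀ j : Fin m,
        (∑ j', ω (e j) b1 * (ω (pm (e j') (f j)) b2 * ω (f j') b3))
          = -(ω (e j) b1 * (((ω.flip b2).comp (pm b3)) (f j))) := by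
      intro j
      have h := sA' ((ω.flip b2).comp (pm.flip (f j))) b3
      calc (∑ j', ω (e j) b1 * (ω (pm (e j') (f j)) b2 * ω (f j') b3))
          = ω (e j) b1 * (∑ j', ω (f j') b3 * ((ω.flip b2).comp (pm.flip (f j))) (e j')) := by
            rw [Finset.mul_sum]
            refine Finset.sum_congr rfl fun j' _ => ?_
            simp only [LinearMap.comp_apply, LinearMap.flip_apply]
            try ring
        _ = ω (e j) b1 * (-(((ω.flip b2).comp (pm.flip (f j))) b3)) := by rw [h]
        _ = -(ω (e j) b1 * (((ω.flip b2).comp (pm b3)) (f j))) := by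
            simp only [LinearMap.comp_apply, LinearMap.flip_apply]
            try ring
    calc (∑ j, ∑ j', ω (e j) b1 * (ω (pm (e j') (f j)) b2 * ω (f j') b3))
        = ∑ j, -(ω (e j) b1 * (((ω.flip b2).comp (pm b3)) (f j))) :=
          Finset.sum_congr rfl fun j _ => step j
      _ = -(∑ j, ω (e j) b1 * (((ω.flip b2).comp (pm b3)) (f j))) := by
          rw [Finset.sum_neg_distrib]
      _ = -(ω (pm b3 b1) b2) := by
          rw [sB ((ω.flip b2).comp (pm b3)) b1]
          simp only [LinearMap.comp_apply, LinearMap.flip_apply]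
  have K2 : ∀ u v w : B, ω (pm u v) w = ω (pm w v) u - ω (pm v w) u := by
    intro u v w
    rw [hinv, map_sub, hanti u (pm v w), hanti u (pm w v)]
    ring
  -- S-relations
  have RS4 : (∑ j, ∑ j', (e j) ⊗ₜ[k] ((e j') ⊗ₜ[k] pm (f j') (f j)))
      = - ∑ j, ∑ j', pm (e j) (e j') ⊗ₜ[k] ((f j) ⊗ₜ[k] (f j')) := by
    have h : (∑ j, ∑ j', (e j) ⊗ₜ[k] ((e j') ⊗ₜ[k] pm (f j') (f j)))
        + (∑ j, ∑ j', pm (e j) (e j') ⊗ₜ[k] ((f j) ⊗ₜ[k] (f j'))) = 0 := by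
      apply ext3
      intro a b c
      rw [map_add]
      simp only [map_sum, pr2_tmul, LinearMap.flip_apply]
      rw [V4 (f a) (f b) (f c), V1 (f a) (f b) (f c)]
      linear_combination K (f b) (f a) (f c)
    exact eq_neg_of_add_eq_zero_left h
  have RS6 : (∑ j, ∑ j', (e j) ⊗ₜ[k] (pm (e j') (f j) ⊗ₜ[k] (f j')))
      = ∑ j, ∑ j', pm (e j') (e j) ⊗ₜ[k] ((f j) ⊗ₜ[k] (f j')) := by
    have h : (∑ j, ∑ j', (e j) ⊗ₜ[k] (pm (e j') (f j) ⊗ₜ[k] (f j')))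
        - (∑ j, ∑ j', pm (e j') (e j) ⊗ₜ[k] ((f j) ⊗ₜ[k] (f j'))) = 0 := by
      apply ext3
      intro a b c
      rw [map_sub]
      simp only [map_sum, pr2_tmul, LinearMap.flip_apply]
      rw [V6 (f a) (f b) (f c), V2 (f a) (f b) (f c)]
      linear_combination - K (f c) (f a) (f b)
    exact sub_eq_zero.mp h
  have RS3 : (∑ j, ∑ j', (e j) ⊗ₜ[k] ((e j') ⊗ₜ[k] pm (f j) (f j')))
      = (∑ j, ∑ j', pm (e j') (e j) ⊗ₜ[k] ((f j) ⊗ₜ[k] (f j')))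
        - ∑ j, ∑ j', pm (e j) (e j') ⊗ₜ[k] ((f j) ⊗ₜ[k] (f j')) := by
    have h : (∑ j, ∑ j', (e j) ⊗ₜ[k] ((e j') ⊗ₜ[k] pm (f j) (f j')))
        - ((∑ j, ∑ j', pm (e j') (e j) ⊗ₜ[k] ((f j) ⊗ₜ[k] (f j')))
          - ∑ j, ∑ j', pm (e j) (e j') ⊗ₜ[k] ((f j) ⊗ₜ[k] (f j'))) = 0 := by
      apply ext3
      intro a b c
      rw [map_sub, map_sub]
      simp only [map_sum, pr2_tmul, LinearMap.flip_apply]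
      rw [V3 (f a) (f b) (f c), V2 (f a) (f b) (f c), V1 (f a) (f b) (f c)]
      linear_combination K2 (f a) (f b) (f c)
    exact sub_eq_zero.mp h
  have RS5 : (∑ j, ∑ j', (e j) ⊗ₜ[k] (pm (f j) (e j') ⊗ₜ[k] (f j')))
      = (∑ j, ∑ j', pm (e j') (e j) ⊗ₜ[k] ((f j) ⊗ₜ[k] (f j')))
        - ∑ j, ∑ j', pm (e j) (e j') ⊗ₜ[k] ((f j) ⊗ₜ[k] (f j')) := by
    have h : (∑ j, ∑ j', (e j) ⊗ₜ[k] (pm (f j) (e j') ⊗ₜ[k] (f j')))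
        - ((∑ j, ∑ j', pm (e j') (e j) ⊗ₜ[k] ((f j) ⊗ₜ[k] (f j')))
          - ∑ j, ∑ j', pm (e j) (e j') ⊗ₜ[k] ((f j) ⊗ₜ[k] (f j'))) = 0 := by
      apply ext3
      intro a b c
      rw [map_sub, map_sub]
      simp only [map_sum, pr2_tmul, LinearMap.flip_apply]
      rw [V5 (f a) (f b) (f c), V2 (f a) (f b) (f c), V1 (f a) (f b) (f c)]
      linear_combination - K (f a) (f b) (f c) + K2 (f a) (f b) (f c)
    exact sub_eq_zero.mp h
  have swapL : ∀ (F : A →ₗ[k] A →ₗ[k] (A ⊗[k] (A ⊗[k] A))),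
      (∑ i, F (x i) (y i)) = ∑ i, F (y i) (x i) := by
    intro F
    have h := congrArg (TensorProduct.lift F) hsymm
    simpa [map_sum] using h
  set MK := TensorProduct.mk k A (A ⊗[k] A) with hMK
  set mk2 := TensorProduct.mk k A A with hmk2
  -- H7 swap (per i)
  have hswap7 : ∀ i, (∑ j, diam (x i) (y j) ⊗ₜ[k] (x j ⊗ₜ[k] y i))
      = ∑ j, diam (x i) (x j) ⊗ₜ[k] (y j ⊗ₜ[k] y i) := by
    intro i
    have h := swapL ((MK.compl₁₂ (diam (x i)) (mk2.flip (y i))).flip)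
    simpa only [LinearMap.flip_apply, LinearMap.compl₁₂_apply, hMK, hmk2,
      TensorProduct.mk_apply] using h
  -- H3 swap (outer i)
  have hswap3 : (∑ i, ∑ j, diam (y i) (x j) ⊗ₜ[k] (x i ⊗ₜ[k] y j))
      = ∑ i, ∑ j, diam (x i) (x j) ⊗ₜ[k] (y i ⊗ₜ[k] y j) := by
    have h := swapL (∑ j, (MK.compl₁₂ (diam.flip (x j)) (mk2.flip (y j))).flip)
    simpa only [LinearMap.sum_apply, LinearMap.flip_apply, LinearMap.compl₁₂_apply,
      hMK, hmk2, TensorProduct.mk_apply] using h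
  -- H5 swap (outer i)
  have hswap5 : (∑ i, ∑ j, (y i) ⊗ₜ[k] (diam (x j) (x i) ⊗ₜ[k] y j))
      = ∑ i, ∑ j, (x i) ⊗ₜ[k] (diam (x j) (y i) ⊗ₜ[k] y j) := by
    have h := swapL (∑ j, (MK.compl₁₂ LinearMap.id
      ((mk2.flip (y j)).comp (diam (x j)))).flip)
    simpa only [LinearMap.sum_apply, LinearMap.flip_apply, LinearMap.compl₁₂_apply,
      LinearMap.comp_apply, LinearMap.id_apply, hMK, hmk2, TensorProduct.mk_apply] using h
  -- derive ident0
  have hP := hPLYBE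
  simp only [Finset.sum_add_distrib, Finset.sum_sub_distrib] at hP
  have h7 : (∑ i, ∑ j, diam (x i) (y j) ⊗ₜ[k] (x j ⊗ₜ[k] y i))
      = ∑ i, ∑ j, diam (x i) (x j) ⊗ₜ[k] (y j ⊗ₜ[k] y i) :=
    Finset.sum_congr rfl fun i _ => hswap7 i
  have h2 : (∑ i, ∑ j, (x j) ⊗ₜ[k] (diam (x i) (y j) ⊗ₜ[k] y i))
      = ∑ i, ∑ j, (x i) ⊗ₜ[k] (diam (x j) (y i) ⊗ₜ[k] y j) := Finset.sum_comm
  have h5 : (∑ i, ∑ j, (y j) ⊗ₜ[k] (diam (x i) (x j) ⊗ₜ[k] y i))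
      = ∑ i, ∑ j, (x i) ⊗ₜ[k] (diam (x j) (y i) ⊗ₜ[k] y j) := by
    have hr : (∑ i, ∑ j, (y j) ⊗ₜ[k] (diam (x i) (x j) ⊗ₜ[k] y i))
        = ∑ i, ∑ j, (y i) ⊗ₜ[k] (diam (x j) (x i) ⊗ₜ[k] y j) := Finset.sum_comm
    rw [hr, hswap5]
  have h4 : (∑ i, ∑ j, (x j) ⊗ₜ[k] ((x i) ⊗ₜ[k] diam (y i) (y j)))
      = ∑ i, ∑ j, (x i) ⊗ₜ[k] ((x j) ⊗ₜ[k] diam (y j) (y i)) := Finset.sum_comm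
  rw [h7, hswap3, h2, h5, h4] at hP
  have hid0 : (∑ i, ∑ j, diam (x i) (x j) ⊗ₜ[k] (y i ⊗ₜ[k] y j))
      + (∑ i, ∑ j, (x i) ⊗ₜ[k] ((x j) ⊗ₜ[k] diam (y j) (y i)))
      - (∑ i, ∑ j, (x i) ⊗ₜ[k] (diam (y i) (x j) ⊗ₜ[k] y j))
      - (∑ i, ∑ j, (x i) ⊗ₜ[k] ((x j) ⊗ₜ[k] diam (y i) (y j))) = 0 := by
    have h3' : (∑ i, ∑ j, diam (x i) (x j) ⊗ₜ[k] (y i ⊗ₜ[k] y j))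
        + (∑ i, ∑ j, (x i) ⊗ₜ[k] ((x j) ⊗ₜ[k] diam (y j) (y i)))
        - (∑ i, ∑ j, (x i) ⊗ₜ[k] (diam (y i) (x j) ⊗ₜ[k] y j))
        - (∑ i, ∑ j, (x i) ⊗ₜ[k] ((x j) ⊗ₜ[k] diam (y i) (y j)))
        = (∑ i, ∑ j, diam (x i) (x j) ⊗ₜ[k] (y j ⊗ₜ[k] y i))
          + (∑ i, ∑ j, (x i) ⊗ₜ[k] (diam (x j) (y i) ⊗ₜ[k] y j))
          + (∑ i, ∑ j, diam (x i) (x j) ⊗ₜ[k] (y i ⊗ₜ[k] y j))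
          + (∑ i, ∑ j, (x i) ⊗ₜ[k] ((x j) ⊗ₜ[k] diam (y j) (y i)))
          - (∑ i, ∑ j, (x i) ⊗ₜ[k] (diam (x j) (y i) ⊗ₜ[k] y j))
          - (∑ i, ∑ j, (x i) ⊗ₜ[k] (diam (y i) (x j) ⊗ₜ[k] y j))
          - (∑ i, ∑ j, diam (x i) (x j) ⊗ₜ[k] (y j ⊗ₜ[k] y i))
          - (∑ i, ∑ j, (x i) ⊗ₜ[k] ((x j) ⊗ₜ[k] diam (y i) (y j))) := by abel
    rw [h3', hP]
  -- sigma reversal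
  set σ : (A ⊗[k] (A ⊗[k] A)) ≃ₗ[k] (A ⊗[k] (A ⊗[k] A)) :=
    (TensorProduct.comm k A (A ⊗[k] A)) ≪≫ₗ
      (TensorProduct.congr (TensorProduct.comm k A A) (LinearEquiv.refl k A)) ≪≫ₗ
      (TensorProduct.assoc k A A A) with hσdef
  have hσ : σ ((∑ i, ∑ j, diam (x i) (x j) ⊗ₜ[k] (y i ⊗ₜ[k] y j))
      + (∑ i, ∑ j, (x i) ⊗ₜ[k] ((x j) ⊗ₜ[k] diam (y j) (y i)))
      - (∑ i, ∑ j, (x i) ⊗ₜ[k] (diam (y i) (x j) ⊗ₜ[k] y j))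
      - (∑ i, ∑ j, (x i) ⊗ₜ[k] ((x j) ⊗ₜ[k] diam (y i) (y j)))) = σ 0 := by rw [hid0]
  simp only [map_add, map_sub, map_sum, map_zero, hσdef, LinearEquiv.trans_apply,
    TensorProduct.comm_tmul, TensorProduct.congr_tmul, LinearEquiv.refl_apply,
    TensorProduct.assoc_tmul] at hσ
  -- hσ : Σ (y j)⊗((y i)⊗D(x i)(x j)) + Σ D(y j)(y i)⊗((x j)⊗(x i))
  --      - Σ (y j)⊗(D(y i)(x j)⊗(x i)) - Σ D(y i)(y j)⊗((x j)⊗(x i)) = 0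
  -- A-chain
  have hA1 : (∑ i, ∑ j, (y j) ⊗ₜ[k] ((y i) ⊗ₜ[k] diam (x i) (x j)))
      = ∑ i, ∑ j, (y j) ⊗ₜ[k] ((x i) ⊗ₜ[k] diam (y i) (x j)) := by
    have h := swapL (∑ j, ((mk2.compl₁₂ LinearMap.id (diam.flip (x j))).compr₂
      (MK (y j))).flip)
    simpa only [LinearMap.sum_apply, LinearMap.flip_apply, LinearMap.compr₂_apply,
      LinearMap.compl₁₂_apply, LinearMap.id_apply, hMK, hmk2, TensorProduct.mk_apply] using h
  have hA2 : ∀ i, (∑ j, (y j) ⊗ₜ[k] ((x i) ⊗ₜ[k] diam (y i) (x j)))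
      = ∑ j, (x j) ⊗ₜ[k] ((x i) ⊗ₜ[k] diam (y i) (y j)) := by
    intro i
    have h := swapL ((MK.compl₁₂ LinearMap.id ((mk2 (x i)).comp (diam (y i)))).flip)
    simpa only [LinearMap.flip_apply, LinearMap.compl₁₂_apply, LinearMap.comp_apply,
      LinearMap.id_apply, hMK, hmk2, TensorProduct.mk_apply] using h
  have hA : (∑ i, ∑ j, (y j) ⊗ₜ[k] ((y i) ⊗ₜ[k] diam (x i) (x j)))
      = ∑ i, ∑ j, (x i) ⊗ₜ[k] ((x j) ⊗ₜ[k] diam (y j) (y i)) := by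
    rw [hA1, Finset.sum_congr rfl fun i _ => hA2 i]
    exact Finset.sum_comm
  -- B-chain
  have hB1 : (∑ i, ∑ j, diam (y j) (y i) ⊗ₜ[k] ((x j) ⊗ₜ[k] (x i)))
      = ∑ i, ∑ j, diam (y j) (x i) ⊗ₜ[k] ((x j) ⊗ₜ[k] (y i)) := by
    have h := swapL (∑ j, (MK.compl₁₂ (diam (y j)) (mk2 (x j))).flip)
    simpa only [LinearMap.sum_apply, LinearMap.flip_apply, LinearMap.compl₁₂_apply,
      hMK, hmk2, TensorProduct.mk_apply] using h
  have hB2 : ∀ i, (∑ j, diam (y j) (x i) ⊗ₜ[k] ((x j) ⊗ₜ[k] (y i)))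
      = ∑ j, diam (x j) (x i) ⊗ₜ[k] ((y j) ⊗ₜ[k] (y i)) := by
    intro i
    have h := swapL ((MK.compl₁₂ (diam.flip (x i)) (mk2.flip (y i))).flip)
    simpa only [LinearMap.flip_apply, LinearMap.compl₁₂_apply, hMK, hmk2,
      TensorProduct.mk_apply] using h
  have hB : (∑ i, ∑ j, diam (y j) (y i) ⊗ₜ[k] ((x j) ⊗ₜ[k] (x i)))
      = ∑ i, ∑ j, diam (x i) (x j) ⊗ₜ[k] ((y i) ⊗ₜ[k] (y j)) := by
    rw [hB1, Finset.sum_congr rfl fun i _ => hB2 i]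
    exact Finset.sum_comm
  -- C-chain
  have hC1 : (∑ i, ∑ j, (y j) ⊗ₜ[k] (diam (y i) (x j) ⊗ₜ[k] (x i)))
      = ∑ i, ∑ j, (y j) ⊗ₜ[k] (diam (x i) (x j) ⊗ₜ[k] (y i)) := by
    have h := swapL (∑ j, ((mk2.compl₁₂ (diam.flip (x j)) LinearMap.id).compr₂
      (MK (y j))).flip)
    simpa only [LinearMap.sum_apply, LinearMap.flip_apply, LinearMap.compr₂_apply,
      LinearMap.compl₁₂_apply, LinearMap.id_apply, hMK, hmk2, TensorProduct.mk_apply] using h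
  have hC2 : ∀ i, (∑ j, (y j) ⊗ₜ[k] (diam (x i) (x j) ⊗ₜ[k] (y i)))
      = ∑ j, (x j) ⊗ₜ[k] (diam (x i) (y j) ⊗ₜ[k] (y i)) := by
    intro i
    have h := swapL ((MK.compl₁₂ LinearMap.id ((mk2.flip (y i)).comp (diam (x i)))).flip)
    simpa only [LinearMap.flip_apply, LinearMap.compl₁₂_apply, LinearMap.comp_apply,
      LinearMap.id_apply, hMK, hmk2, TensorProduct.mk_apply] using h
  have hC : (∑ i, ∑ j, (y j) ⊗ₜ[k] (diam (y i) (x j) ⊗ₜ[k] (x i)))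
      = ∑ i, ∑ j, (x i) ⊗ₜ[k] (diam (x j) (y i) ⊗ₜ[k] (y j)) := by
    rw [hC1, Finset.sum_congr rfl fun i _ => hC2 i]
    exact Finset.sum_comm
  -- D-chain
  have hD1 : (∑ i, ∑ j, diam (y i) (y j) ⊗ₜ[k] ((x j) ⊗ₜ[k] (x i)))
      = ∑ i, ∑ j, diam (x i) (y j) ⊗ₜ[k] ((x j) ⊗ₜ[k] (y i)) := by
    have h := swapL (∑ j, (MK.compl₁₂ (diam.flip (y j)) (mk2 (x j))).flip)
    simpa only [LinearMap.sum_apply, LinearMap.flip_apply, LinearMap.compl₁₂_apply,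
      hMK, hmk2, TensorProduct.mk_apply] using h
  have hD : (∑ i, ∑ j, diam (y i) (y j) ⊗ₜ[k] ((x j) ⊗ₜ[k] (x i)))
      = ∑ i, ∑ j, diam (x i) (x j) ⊗ₜ[k] ((y j) ⊗ₜ[k] (y i)) := by
    rw [hD1]
    exact Finset.sum_congr rfl fun i _ => hswap7 i
  rw [hA, hB, hC, hD] at hσ
  have hid1 : (∑ i, ∑ j, (x i) ⊗ₜ[k] ((x j) ⊗ₜ[k] diam (y j) (y i)))
      + (∑ i, ∑ j, diam (x i) (x j) ⊗ₜ[k] ((y i) ⊗ₜ[k] (y j)))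
      - (∑ i, ∑ j, (x i) ⊗ₜ[k] (diam (x j) (y i) ⊗ₜ[k] (y j)))
      - (∑ i, ∑ j, diam (x i) (x j) ⊗ₜ[k] ((y j) ⊗ₜ[k] (y i))) = 0 := hσ
  -- hXa, hXb
  have hXa : (∑ i, ∑ j, diam (x i) (x j) ⊗ₜ[k] (y i ⊗ₜ[k] y j))
      + (∑ i, ∑ j, (x i) ⊗ₜ[k] ((x j) ⊗ₜ[k] diam (y j) (y i)))
      = (∑ i, ∑ j, (x i) ⊗ₜ[k] ((x j) ⊗ₜ[k] diam (y i) (y j)))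
        + (∑ i, ∑ j, (x i) ⊗ₜ[k] (diam (y i) (x j) ⊗ₜ[k] y j)) := by
    have h2 : ((∑ i, ∑ j, diam (x i) (x j) ⊗ₜ[k] (y i ⊗ₜ[k] y j))
        + (∑ i, ∑ j, (x i) ⊗ₜ[k] ((x j) ⊗ₜ[k] diam (y j) (y i))))
        - ((∑ i, ∑ j, (x i) ⊗ₜ[k] ((x j) ⊗ₜ[k] diam (y i) (y j)))
          + (∑ i, ∑ j, (x i) ⊗ₜ[k] (diam (y i) (x j) ⊗ₜ[k] y j))) = 0 := by
      rw [← hid0]; abel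
    exact sub_eq_zero.mp h2
  have hXb : (∑ i, ∑ j, (x i) ⊗ₜ[k] ((x j) ⊗ₜ[k] diam (y i) (y j)))
      + (∑ i, ∑ j, (x i) ⊗ₜ[k] (diam (y i) (x j) ⊗ₜ[k] y j))
      = (∑ i, ∑ j, diam (x i) (x j) ⊗ₜ[k] ((y j) ⊗ₜ[k] (y i)))
        + (∑ i, ∑ j, (x i) ⊗ₜ[k] (diam (x j) (y i) ⊗ₜ[k] (y j))) := by
    have h2 : ((∑ i, ∑ j, (x i) ⊗ₜ[k] ((x j) ⊗ₜ[k] diam (y i) (y j)))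
        + (∑ i, ∑ j, (x i) ⊗ₜ[k] (diam (y i) (x j) ⊗ₜ[k] y j)))
        - ((∑ i, ∑ j, diam (x i) (x j) ⊗ₜ[k] ((y j) ⊗ₜ[k] (y i)))
          + (∑ i, ∑ j, (x i) ⊗ₜ[k] (diam (x j) (y i) ⊗ₜ[k] (y j)))) = 0 := by
      have hh : ((∑ i, ∑ j, (x i) ⊗ₜ[k] ((x j) ⊗ₜ[k] diam (y i) (y j)))
          + (∑ i, ∑ j, (x i) ⊗ₜ[k] (diam (y i) (x j) ⊗ₜ[k] y j)))
          - ((∑ i, ∑ j, diam (x i) (x j) ⊗ₜ[k] ((y j) ⊗ₜ[k] (y i)))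
            + (∑ i, ∑ j, (x i) ⊗ₜ[k] (diam (x j) (y i) ⊗ₜ[k] (y j))))
          = ((∑ i, ∑ j, (x i) ⊗ₜ[k] ((x j) ⊗ₜ[k] diam (y j) (y i)))
              + (∑ i, ∑ j, diam (x i) (x j) ⊗ₜ[k] ((y i) ⊗ₜ[k] (y j)))
              - (∑ i, ∑ j, (x i) ⊗ₜ[k] (diam (x j) (y i) ⊗ₜ[k] (y j)))
              - (∑ i, ∑ j, diam (x i) (x j) ⊗ₜ[k] ((y j) ⊗ₜ[k] (y i))))
            - ((∑ i, ∑ j, diam (x i) (x j) ⊗ₜ[k] (y i ⊗ₜ[k] y j))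
              + (∑ i, ∑ j, (x i) ⊗ₜ[k] ((x j) ⊗ₜ[k] diam (y j) (y i)))
              - (∑ i, ∑ j, (x i) ⊗ₜ[k] (diam (y i) (x j) ⊗ₜ[k] y j))
              - (∑ i, ∑ j, (x i) ⊗ₜ[k] ((x j) ⊗ₜ[k] diam (y i) (y j)))) := by abel
      rw [hh, hid0, hid1]
      simp
    exact sub_eq_zero.mp h2
  constructor
  · -- Part 1 : skew-symmetry
    have hBneg : (∑ j, e j ⊗ₜ[k] f j : B ⊗[k] B) = - ∑ j, f j ⊗ₜ[k] e j := by
      have h1 : ∀ j, (f j : B) = ∑ l, ω (f j) (f l) • e l := fun j => (L1 (f j)).symm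
      have c1 : (∑ j, e j ⊗ₜ[k] f j : B ⊗[k] B)
          = ∑ j, ∑ l, ω (f j) (f l) • (e j ⊗ₜ[k] e l) := by
        refine Finset.sum_congr rfl fun j _ => ?_
        conv_lhs => rw [h1 j]
        rw [tmul_sum]
        exact Finset.sum_congr rfl fun l _ => by rw [tmul_smul]
      have c2 : (∑ j, f j ⊗ₜ[k] e j : B ⊗[k] B)
          = ∑ j, ∑ l, ω (f j) (f l) • (e l ⊗ₜ[k] e j) := by
        refine Finset.sum_congr rfl fun j _ => ?_
        conv_lhs => rw [h1 j]
        rw [sum_tmul]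
        exact Finset.sum_congr rfl fun l _ => by rw [smul_tmul']
      rw [c1, c2]
      have flip : (∑ j, ∑ l, ω (f j) (f l) • (e l ⊗ₜ[k] e j) : B ⊗[k] B)
          = ∑ j, ∑ l, -(ω (f j) (f l) • (e j ⊗ₜ[k] e l)) := by
        rw [Finset.sum_comm]
        refine Finset.sum_congr rfl fun u _ => Finset.sum_congr rfl fun v _ => ?_
        rw [hanti, neg_smul]
      rw [flip]
      simp [Finset.sum_neg_distrib]
    apply (tensorTensorTensorComm k A B A B).injective
    simp only [map_sum, map_neg, tensorTensorTensorComm_tmul]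
    simp only [← tmul_sum]
    simp only [← sum_tmul]
    rw [hsymm, hBneg]
    simp [tmul_neg]
  · -- Part 2 : CYBE
    apply ((TensorProduct.congr (LinearEquiv.refl k (A ⊗[k] B))
      (tensorTensorTensorComm k A B A B)) ≪≫ₗ
      (tensorTensorTensorComm k A B (A ⊗[k] A) (B ⊗[k] B))).injective
    rw [map_zero]
    simp only [hbr, map_sum]
    simp only [tmul_sub, sub_tmul, map_sub, map_add, LinearEquiv.trans_apply,
      TensorProduct.congr_tmul, LinearEquiv.refl_apply, tensorTensorTensorComm_tmul]
    simp only [Finset.sum_add_distrib, Finset.sum_sub_distrib]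
    simp only [← tmul_sum]
    simp only [← sum_tmul]
    have RS3c : (∑ j, e j ⊗ₜ[k] ∑ j', e j' ⊗ₜ[k] pm (f j) (f j'))
        = (∑ j, ∑ j', pm (e j') (e j) ⊗ₜ[k] ((f j) ⊗ₜ[k] (f j')))
          - ∑ j, ∑ j', pm (e j) (e j') ⊗ₜ[k] ((f j) ⊗ₜ[k] (f j')) := by
      simp only [tmul_sum]
      exact RS3
    have RS4c : (∑ j, e j ⊗ₜ[k] ∑ j', e j' ⊗ₜ[k] pm (f j') (f j))
        = - ∑ j, ∑ j', pm (e j) (e j') ⊗ₜ[k] ((f j) ⊗ₜ[k] (f j')) := by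
      simp only [tmul_sum]
      exact RS4
    have RS5c : (∑ j, e j ⊗ₜ[k] ∑ j', pm (f j) (e j') ⊗ₜ[k] (f j'))
        = (∑ j, ∑ j', pm (e j') (e j) ⊗ₜ[k] ((f j) ⊗ₜ[k] (f j')))
          - ∑ j, ∑ j', pm (e j) (e j') ⊗ₜ[k] ((f j) ⊗ₜ[k] (f j')) := by
      simp only [tmul_sum]
      exact RS5
    have RS6c : (∑ j, e j ⊗ₜ[k] ∑ j', pm (e j') (f j) ⊗ₜ[k] (f j'))
        = ∑ j, ∑ j', pm (e j') (e j) ⊗ₜ[k] ((f j) ⊗ₜ[k] (f j')) := by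
      simp only [tmul_sum]
      exact RS6
    rw [RS3c, RS4c, RS5c, RS6c]
    have hX2 : (∑ i, ∑ i', diam (x i') (x i) ⊗ₜ[k] (y i ⊗ₜ[k] y i'))
        = ∑ i, ∑ i', diam (x i) (x i') ⊗ₜ[k] (y i' ⊗ₜ[k] y i) := Finset.sum_comm
    rw [hX2]
    have hfin : ∀ (X1 X2 X3 X4 X5 X6 : A ⊗[k] (A ⊗[k] A)) (S1 S2 : B ⊗[k] (B ⊗[k] B)),
        X1 + X4 = X3 + X5 → X3 + X5 = X2 + X6 →
        X1 ⊗ₜ[k] S1 - X2 ⊗ₜ[k] S2 + (X3 ⊗ₜ[k] (S2 - S1) - X4 ⊗ₜ[k] (-S1))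
          + (X5 ⊗ₜ[k] (S2 - S1) - X6 ⊗ₜ[k] S2) = 0 := by
      intro X1 X2 X3 X4 X5 X6 S1 S2 ha hb
      have expand : X1 ⊗ₜ[k] S1 - X2 ⊗ₜ[k] S2 + (X3 ⊗ₜ[k] (S2 - S1) - X4 ⊗ₜ[k] (-S1))
          + (X5 ⊗ₜ[k] (S2 - S1) - X6 ⊗ₜ[k] S2)
          = ((X1 + X4) - (X3 + X5)) ⊗ₜ[k] S1 + ((X3 + X5) - (X2 + X6)) ⊗ₜ[k] S2 := by
        simp only [tmul_sub, tmul_neg, sub_tmul, add_tmul, sub_neg_eq_add]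
        abel
      rw [expand, ha, hb]
      simp
    exact hfin _ _ _ _ _ _ _ _ hXa hXb
end

section
/- Let (A, ⋄) be a pre-Lie algebra, (B, ·, ω) a finite-dimensional quadratic perm algebra with basis {e_j} and ω-dual basis {f_j}, and (A⊗B, [−,−]) the induced Lie algebra. If r ∈ A⊗A is such that r − τ(r) is (L, ad)-invariant, meaning (L(a)⊗id + id⊗(L(a)−R(a)))(r − τ(r)) = 0 for all a ∈ A where L(a)b = a⋄b and R(a)b = b⋄a, then r̂ := Σ_{i,j} (x_i ⊗ e_j) ⊗ (y_i ⊗ f_j) satisfies: r̂ + τ(r̂) is ad-invariant in A⊗B, i.e. (id ⊗ ad(z) + ad(z) ⊗ id)(r̂ + τ(r̂)) = 0 for all z ∈ A⊗B. -/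
open TensorProduct

noncomputable def PhiMap (k A B : Type*) [Field k]
    [AddCommGroup A] [Module k A] [AddCommGroup B] [Module k B] :
    (A ⊗[k] A) →ₗ[k] (B ⊗[k] B) →ₗ[k] ((A ⊗[k] B) ⊗[k] (A ⊗[k] B)) :=
  (TensorProduct.mk k (A ⊗[k] A) (B ⊗[k] B)).compr₂
    (TensorProduct.tensorTensorTensorComm k A A B B).toLinearMap

lemma PhiMap_tmul (k A B : Type*) [Field k]
    [AddCommGroup A] [Module k A] [AddCommGroup B] [Module k B]
    (u v : A) (c d : B) :
    PhiMap k A B (u ⊗ₜ[k] v) (c ⊗ₜ[k] d) = (u ⊗ₜ[k] c) ⊗ₜ[k] (v ⊗ₜ[k] d) := by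
  simp [PhiMap, TensorProduct.tensorTensorTensorComm_tmul]

noncomputable def OmMap {k B : Type*} [Field k] [AddCommGroup B] [Module k B]
    (ω : B →ₗ[k] B →ₗ[k] k) (u v : B) : (B ⊗[k] B) →ₗ[k] k :=
  TensorProduct.lift ((ω.flip u).smulRight (ω.flip v))

lemma OmMap_tmul {k B : Type*} [Field k] [AddCommGroup B] [Module k B]
    (ω : B →ₗ[k] B →ₗ[k] k) (u v c d : B) :
    OmMap ω u v (c ⊗ₜ[k] d) = ω c u * ω d v := by
  simp [OmMap, smul_eq_mul]

/-- if `r − τ(r)` is `(L, ad)`-invariant in a pre-Lie algebra `(A,⋄)`,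
then `r̂ + τ(r̂)` is `ad`-invariant in the induced Lie algebra `(A⊗B, [−,−])`,
where `r̂ = Σ_{i,j} (x_i⊗e_j)⊗(y_i⊗f_j)` is built from a basis `e` and its ω-dual
basis `f` of a quadratic perm algebra `(B,·,ω)`. -/
theorem stmt11 (k A B : Type*) [Field k]
    [AddCommGroup A] [Module k A] [AddCommGroup B] [Module k B]
    (diam : A →ₗ[k] A →ₗ[k] A)
    (hpl : ∀ a b c : A,
      diam a (diam b c) - diam (diam a b) c = diam b (diam a c) - diam (diam b a) c)
    (pm : B →ₗ[k] B →ₗ[k] B)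
    (hp1 : ∀ a b c : B, pm a (pm b c) = pm (pm a b) c)
    (hp2 : ∀ a b c : B, pm (pm a b) c = pm (pm b a) c)
    (ω : B →ₗ[k] B →ₗ[k] k)
    (hanti : ∀ a b : B, ω a b = - ω b a)
    (hinv : ∀ a b c : B, ω (pm a b) c = ω a (pm b c - pm c b))
    (m : ℕ) (e : Module.Basis (Fin m) k B) (f : Fin m → B)
    (hdual : ∀ i j, ω (e i) (f j) = if i = j then 1 else 0)
    (br : (A ⊗[k] B) →ₗ[k] (A ⊗[k] B) →ₗ[k] (A ⊗[k] B))
    (hbr : ∀ (a1 a2 : A) (b1 b2 : B),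
      br (a1 ⊗ₜ[k] b1) (a2 ⊗ₜ[k] b2)
        = (diam a1 a2) ⊗ₜ[k] (pm b1 b2) - (diam a2 a1) ⊗ₜ[k] (pm b2 b1))
    (n : ℕ) (x y : Fin n → A)
    (hrinv : ∀ a : A,
      ((∑ i, (diam a (x i) ⊗ₜ[k] y i
              + x i ⊗ₜ[k] (diam a (y i) - diam (y i) a)))
        - ∑ i, (diam a (y i) ⊗ₜ[k] x i
              + y i ⊗ₜ[k] (diam a (x i) - diam (x i) a))) = 0) :
    ∀ z : A ⊗[k] B,
      (∑ i, ∑ j,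
          ((x i ⊗ₜ[k] e j) ⊗ₜ[k] br z (y i ⊗ₜ[k] f j)
          + br z (x i ⊗ₜ[k] e j) ⊗ₜ[k] (y i ⊗ₜ[k] f j)
          + (y i ⊗ₜ[k] f j) ⊗ₜ[k] br z (x i ⊗ₜ[k] e j)
          + br z (y i ⊗ₜ[k] f j) ⊗ₜ[k] (x i ⊗ₜ[k] e j))) = 0 := by
  -- preliminary scalar facts
  have hco : ∀ (c : B) (p : Fin m), ω c (f p) = e.repr c p := by
    intro c p
    have h : ω.flip (f p) = e.coord p := by
      refine Module.Basis.ext e fun i => ?_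
      simp [Module.Basis.coord_apply, hdual, Finsupp.single_apply, eq_comm]
    calc ω c (f p) = ω.flip (f p) c := rfl
      _ = e.coord p c := by rw [h]
      _ = e.repr c p := Module.Basis.coord_apply ..
  have hexp : ∀ c : B, ∑ p, ω c (f p) • e p = c := by
    intro c
    conv_rhs => rw [← e.sum_repr c]
    exact Finset.sum_congr rfl fun p _ => by rw [hco]
  have hswap : ∀ (u c d : B), ω (pm u c) d = - ω (pm u d) c := by
    intro u c d
    rw [hinv, hinv, map_sub, map_sub]
    ring
  have hf_neg : ∀ q : Fin m, ∑ j, ω (f j) (f q) • e j = -(f q) := by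
    intro q
    have h1 : ∀ j : Fin m, ω (f j) (f q) • e j = -(ω (f q) (f j) • e j) := by
      intro j; rw [hanti, neg_smul]
    rw [Finset.sum_congr rfl fun j _ => h1 j, Finset.sum_neg_distrib, hexp]
  have hsum1 : ∀ (M : B →ₗ[k] B) (p q : Fin m),
      ∑ j, ω (M (e j)) (f p) * ω (f j) (f q) = - ω (M (f q)) (f p) := by
    intro M p q
    have step : ω (M (∑ j, ω (f j) (f q) • e j)) (f p)
        = ∑ j, ω (M (e j)) (f p) * ω (f j) (f q) := by
      simp [map_sum, map_smul, LinearMap.sum_apply, LinearMap.smul_apply, smul_eq_mul,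
        mul_comm]
    rw [← step, hf_neg]
    simp
  -- injectivity via dual coefficients
  have hOm_repr : ∀ (p q : Fin m) (u : B ⊗[k] B),
      OmMap ω (f p) (f q) u = (e.tensorProduct e).repr u (p, q) := by
    intro p q u
    induction u using TensorProduct.induction_on with
    | zero => simp
    | tmul c d =>
        rw [OmMap_tmul, Module.Basis.tensorProduct_repr_tmul_apply, hco, hco, smul_eq_mul,
          mul_comm]
    | add u v hu hv => simp [map_add, hu, hv]
  have hinj : ∀ u v : B ⊗[k] B,
      (∀ p q : Fin m, OmMap ω (f p) (f q) u = OmMap ω (f p) (f q) v) → u = v := by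
    intro u v h
    apply (e.tensorProduct e).repr.injective
    refine Finsupp.ext fun pq => ?_
    obtain ⟨p, q⟩ := pq
    rw [← hOm_repr, ← hOm_repr]
    exact h p q
  -- the B ⊗ B dual-basis identities
  have lemE0 : (∑ j, f j ⊗ₜ[k] e j) = - ∑ j, e j ⊗ₜ[k] f j := by
    apply hinj
    intro p q
    rw [map_neg, map_sum, map_sum]
    simp only [OmMap_tmul]
    simp [hdual, mul_ite, ite_mul, mul_one, mul_zero, one_mul, zero_mul,
      Finset.sum_ite_eq', hanti (f p) (f q)]
  intro z
  induction z using TensorProduct.induction_on with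
  | zero => simp
  | add u v hu hv =>
      calc (∑ i, ∑ j,
          ((x i ⊗ₜ[k] e j) ⊗ₜ[k] br (u + v) (y i ⊗ₜ[k] f j)
          + br (u + v) (x i ⊗ₜ[k] e j) ⊗ₜ[k] (y i ⊗ₜ[k] f j)
          + (y i ⊗ₜ[k] f j) ⊗ₜ[k] br (u + v) (x i ⊗ₜ[k] e j)
          + br (u + v) (y i ⊗ₜ[k] f j) ⊗ₜ[k] (x i ⊗ₜ[k] e j)))
          = (∑ i, ∑ j,
          ((x i ⊗ₜ[k] e j) ⊗ₜ[k] br u (y i ⊗ₜ[k] f j)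
          + br u (x i ⊗ₜ[k] e j) ⊗ₜ[k] (y i ⊗ₜ[k] f j)
          + (y i ⊗ₜ[k] f j) ⊗ₜ[k] br u (x i ⊗ₜ[k] e j)
          + br u (y i ⊗ₜ[k] f j) ⊗ₜ[k] (x i ⊗ₜ[k] e j)))
          + (∑ i, ∑ j,
          ((x i ⊗ₜ[k] e j) ⊗ₜ[k] br v (y i ⊗ₜ[k] f j)
          + br v (x i ⊗ₜ[k] e j) ⊗ₜ[k] (y i ⊗ₜ[k] f j)
          + (y i ⊗ₜ[k] f j) ⊗ₜ[k] br v (x i ⊗ₜ[k] e j)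
          + br v (y i ⊗ₜ[k] f j) ⊗ₜ[k] (x i ⊗ₜ[k] e j))) := by
            rw [← Finset.sum_add_distrib]
            refine Finset.sum_congr rfl fun i _ => ?_
            rw [← Finset.sum_add_distrib]
            refine Finset.sum_congr rfl fun j _ => ?_
            simp only [map_add, LinearMap.add_apply, tmul_add, add_tmul]
            abel
        _ = 0 := by rw [hu, hv, add_zero]
  | tmul a b0 =>
      have lemA : (∑ j, pm b0 (e j) ⊗ₜ[k] f j) = ∑ j, e j ⊗ₜ[k] pm b0 (f j) := by
        apply hinj
        intro p q
        rw [map_sum, map_sum]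
        simp only [OmMap_tmul]
        rw [hsum1 (pm b0) p q]
        simp only [hdual, ite_mul, one_mul, zero_mul, Finset.sum_ite_eq',
          Finset.mem_univ, if_true]
        linear_combination -hswap b0 (f q) (f p)
      have lemB : (∑ j, pm (e j) b0 ⊗ₜ[k] f j)
          = (∑ j, e j ⊗ₜ[k] pm b0 (f j)) - ∑ j, e j ⊗ₜ[k] pm (f j) b0 := by
        apply hinj
        intro p q
        rw [map_sub, map_sum, map_sum, map_sum]
        simp only [OmMap_tmul]
        have h1 := hsum1 (pm.flip b0) p q
        simp only [LinearMap.flip_apply] at h1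
        rw [h1]
        simp only [hdual, ite_mul, one_mul, zero_mul, Finset.sum_ite_eq',
          Finset.mem_univ, if_true]
        have e1 : ω (pm (f q) b0) (f p)
            = ω (f q) (pm b0 (f p)) - ω (f q) (pm (f p) b0) := by
          rw [hinv, map_sub]
        rw [e1, hanti (f q) (pm b0 (f p)), hanti (f q) (pm (f p) b0)]
        ring
      have lemC : (∑ j, pm b0 (f j) ⊗ₜ[k] e j) = - ∑ j, e j ⊗ₜ[k] pm b0 (f j) := by
        have h := congrArg (LinearMap.rTensor B (pm b0)) lemE0
        simp only [map_sum, map_neg, LinearMap.rTensor_tmul] at h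
        rw [h, lemA]
      have lemD : (∑ j, pm (f j) b0 ⊗ₜ[k] e j)
          = (∑ j, e j ⊗ₜ[k] pm (f j) b0) - ∑ j, e j ⊗ₜ[k] pm b0 (f j) := by
        have h := congrArg (LinearMap.rTensor B (pm.flip b0)) lemE0
        simp only [map_sum, map_neg, LinearMap.rTensor_tmul, LinearMap.flip_apply] at h
        rw [h, lemB]
        abel
      have lemG1 : (∑ j, f j ⊗ₜ[k] pm b0 (e j)) = - ∑ j, e j ⊗ₜ[k] pm b0 (f j) := by
        have h := congrArg (LinearMap.lTensor B (pm b0)) lemE0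
        simp only [map_sum, map_neg, LinearMap.lTensor_tmul] at h
        exact h
      have lemG2 : (∑ j, f j ⊗ₜ[k] pm (e j) b0) = - ∑ j, e j ⊗ₜ[k] pm (f j) b0 := by
        have h := congrArg (LinearMap.lTensor B (pm.flip b0)) lemE0
        simp only [map_sum, map_neg, LinearMap.lTensor_tmul, LinearMap.flip_apply] at h
        exact h
      have hD : ∑ i, ((diam a (x i) ⊗ₜ[k] y i
              + x i ⊗ₜ[k] (diam a (y i) - diam (y i) a))
            - (diam a (y i) ⊗ₜ[k] x i
              + y i ⊗ₜ[k] (diam a (x i) - diam (x i) a))) = 0 := by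
        rw [Finset.sum_sub_distrib]
        exact hrinv a
      have hDc : ∑ i, (TensorProduct.comm k A A) ((diam a (x i) ⊗ₜ[k] y i
              + x i ⊗ₜ[k] (diam a (y i) - diam (y i) a))
            - (diam a (y i) ⊗ₜ[k] x i
              + y i ⊗ₜ[k] (diam a (x i) - diam (x i) a))) = 0 := by
        rw [← map_sum, hD, map_zero]
      have hC1 : ∑ i, (x i ⊗ₜ[k] diam a (y i) + diam a (x i) ⊗ₜ[k] y i
            - diam (x i) a ⊗ₜ[k] y i - y i ⊗ₜ[k] diam a (x i)
            - diam a (y i) ⊗ₜ[k] x i + diam (y i) a ⊗ₜ[k] x i) = 0 := by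
        calc ∑ i, (x i ⊗ₜ[k] diam a (y i) + diam a (x i) ⊗ₜ[k] y i
            - diam (x i) a ⊗ₜ[k] y i - y i ⊗ₜ[k] diam a (x i)
            - diam a (y i) ⊗ₜ[k] x i + diam (y i) a ⊗ₜ[k] x i)
            = ∑ i, (-((TensorProduct.comm k A A) ((diam a (x i) ⊗ₜ[k] y i
              + x i ⊗ₜ[k] (diam a (y i) - diam (y i) a))
            - (diam a (y i) ⊗ₜ[k] x i
              + y i ⊗ₜ[k] (diam a (x i) - diam (x i) a))))) :=
              Finset.sum_congr rfl fun i _ => by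
                simp only [map_sub, map_add, TensorProduct.comm_tmul, tmul_sub, sub_tmul]
                abel
          _ = 0 := by rw [Finset.sum_neg_distrib, hDc, neg_zero]
      have hC2 : ∑ i, (-(x i ⊗ₜ[k] diam (y i) a) + diam (x i) a ⊗ₜ[k] y i
            + y i ⊗ₜ[k] diam (x i) a - diam (y i) a ⊗ₜ[k] x i) = 0 := by
        calc ∑ i, (-(x i ⊗ₜ[k] diam (y i) a) + diam (x i) a ⊗ₜ[k] y i
            + y i ⊗ₜ[k] diam (x i) a - diam (y i) a ⊗ₜ[k] x i)
            = ∑ i, (((diam a (x i) ⊗ₜ[k] y i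
              + x i ⊗ₜ[k] (diam a (y i) - diam (y i) a))
            - (diam a (y i) ⊗ₜ[k] x i
              + y i ⊗ₜ[k] (diam a (x i) - diam (x i) a)))
              + (TensorProduct.comm k A A) ((diam a (x i) ⊗ₜ[k] y i
              + x i ⊗ₜ[k] (diam a (y i) - diam (y i) a))
            - (diam a (y i) ⊗ₜ[k] x i
              + y i ⊗ₜ[k] (diam a (x i) - diam (x i) a)))) :=
              Finset.sum_congr rfl fun i _ => by
                simp only [map_sub, map_add, TensorProduct.comm_tmul, tmul_sub, sub_tmul]
                abel
          _ = 0 := by rw [Finset.sum_add_distrib, hD, hDc, add_zero]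
      set β1 : B ⊗[k] B := ∑ j, e j ⊗ₜ[k] pm b0 (f j) with hβ1
      set β2 : B ⊗[k] B := ∑ j, e j ⊗ₜ[k] pm (f j) b0 with hβ2
      clear_value β1 β2
      calc (∑ i, ∑ j,
          ((x i ⊗ₜ[k] e j) ⊗ₜ[k] br (a ⊗ₜ[k] b0) (y i ⊗ₜ[k] f j)
          + br (a ⊗ₜ[k] b0) (x i ⊗ₜ[k] e j) ⊗ₜ[k] (y i ⊗ₜ[k] f j)
          + (y i ⊗ₜ[k] f j) ⊗ₜ[k] br (a ⊗ₜ[k] b0) (x i ⊗ₜ[k] e j)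
          + br (a ⊗ₜ[k] b0) (y i ⊗ₜ[k] f j) ⊗ₜ[k] (x i ⊗ₜ[k] e j)))
          = ∑ i, (PhiMap k A B (x i ⊗ₜ[k] diam a (y i) + diam a (x i) ⊗ₜ[k] y i
            - diam (x i) a ⊗ₜ[k] y i - y i ⊗ₜ[k] diam a (x i)
            - diam a (y i) ⊗ₜ[k] x i + diam (y i) a ⊗ₜ[k] x i)
              β1
            + PhiMap k A B (-(x i ⊗ₜ[k] diam (y i) a) + diam (x i) a ⊗ₜ[k] y i
            + y i ⊗ₜ[k] diam (x i) a - diam (y i) a ⊗ₜ[k] x i)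
              β2) :=
            Finset.sum_congr rfl fun i _ => by
              simp only [hbr, tmul_sub, sub_tmul, ← PhiMap_tmul]
              simp only [Finset.sum_add_distrib, Finset.sum_sub_distrib, ← map_sum]
              rw [lemA, lemB, lemC, lemD, lemG1, lemG2, ← hβ1, ← hβ2]
              simp only [map_add, map_sub, map_neg, LinearMap.add_apply,
                LinearMap.sub_apply, LinearMap.neg_apply]
              abel
        _ = PhiMap k A B (∑ i, (x i ⊗ₜ[k] diam a (y i) + diam a (x i) ⊗ₜ[k] y i
            - diam (x i) a ⊗ₜ[k] y i - y i ⊗ₜ[k] diam a (x i)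
            - diam a (y i) ⊗ₜ[k] x i + diam (y i) a ⊗ₜ[k] x i))
              β1
            + PhiMap k A B (∑ i, (-(x i ⊗ₜ[k] diam (y i) a) + diam (x i) a ⊗ₜ[k] y i
            + y i ⊗ₜ[k] diam (x i) a - diam (y i) a ⊗ₜ[k] x i))
              β2 := by
            conv_rhs => rw [map_sum, LinearMap.sum_apply, map_sum, LinearMap.sum_apply]
            exact Finset.sum_add_distrib
        _ = 0 := by rw [hC1, hC2]; simp
end

section
/- Let (A, *) be an associative algebra and (A, [−,−]) its commutator Lie algebra. If r = Σ_i x_i ⊗ y_i ∈ A⊗A is a solution of the associative Yang-Baxter equation r12*r13 + r13*r23 − r23*r12 = 0 and r + τ(r) is invariant in the sense that (id⊗L(a) − R(a)⊗id)(r + τ(r)) = 0 for all a ∈ A (where L(a)b = a*b, R(a)b = b*a), then r is a solution of the classical Yang-Baxter equation [r12,r13] + [r13,r23] + [r12,r23] = 0 in (A, [−,−]), and r + τ(r) is ad-invariant: (id⊗ad(a) + ad(a)⊗id)(r + τ(r)) = 0 for all a. -/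
open TensorProduct

/-- if `r` solves the associative Yang-Baxter equation in `(A,*)`
and `r + τ(r)` is `(L,R)`-invariant, then `r` solves the classical Yang-Baxter
equation in the commutator Lie algebra and `r + τ(r)` is `ad`-invariant. -/
theorem stmt12 (k A : Type*) [Field k] [AddCommGroup A] [Module k A]
    (m : A →ₗ[k] A →ₗ[k] A)
    (hassoc : ∀ a b c : A, m (m a b) c = m a (m b c))
    (br : A →ₗ[k] A →ₗ[k] A)
    (hbr : ∀ a b : A, br a b = m a b - m b a)
    (n : ℕ) (x y : Fin n → A)
    (hAYBE : (∑ i, ∑ j,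
        (m (x i) (x j) ⊗ₜ[k] (y i ⊗ₜ[k] y j)
        + x i ⊗ₜ[k] (x j ⊗ₜ[k] m (y i) (y j))
        - x j ⊗ₜ[k] (m (x i) (y j) ⊗ₜ[k] y i))) = 0)
    (hsyminv : ∀ a : A,
      (∑ i, (x i ⊗ₜ[k] m a (y i) - m (x i) a ⊗ₜ[k] y i
            + y i ⊗ₜ[k] m a (x i) - m (y i) a ⊗ₜ[k] x i)) = 0) :
    ((∑ i, ∑ j,
        (br (x i) (x j) ⊗ₜ[k] (y i ⊗ₜ[k] y j)
        + x i ⊗ₜ[k] (x j ⊗ₜ[k] br (y i) (y j))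
        + x i ⊗ₜ[k] (br (y i) (x j) ⊗ₜ[k] y j))) = 0) ∧
    (∀ a : A,
      (∑ i, (x i ⊗ₜ[k] br a (y i) + br a (x i) ⊗ₜ[k] y i
            + y i ⊗ₜ[k] br a (x i) + br a (y i) ⊗ₜ[k] x i)) = 0) := by
  constructor
  · -- CYBE
    -- abbreviations for the various summands
    set Aterm : Fin n → Fin n → A ⊗[k] (A ⊗[k] A) := fun i j =>
      m (x i) (x j) ⊗ₜ[k] (y i ⊗ₜ[k] y j)
      + x i ⊗ₜ[k] (x j ⊗ₜ[k] m (y i) (y j))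
      - x j ⊗ₜ[k] (m (x i) (y j) ⊗ₜ[k] y i) with hAterm
    set Sterm : Fin n → Fin n → A ⊗[k] (A ⊗[k] A) := fun i j =>
      y i ⊗ₜ[k] (m (x i) (x j) ⊗ₜ[k] y j)
      + x j ⊗ₜ[k] (x i ⊗ₜ[k] m (y i) (y j))
      - m (x i) (y j) ⊗ₜ[k] (x j ⊗ₜ[k] y i) with hSterm
    set Kterm : Fin n → Fin n → A ⊗[k] (A ⊗[k] A) := fun i j =>
      m (x j) (y i) ⊗ₜ[k] (x i ⊗ₜ[k] y j)
      - y i ⊗ₜ[k] (m (x i) (x j) ⊗ₜ[k] y j)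
      + m (x j) (x i) ⊗ₜ[k] (y i ⊗ₜ[k] y j)
      - x i ⊗ₜ[k] (m (y i) (x j) ⊗ₜ[k] y j) with hKterm
    set Gterm : Fin n → Fin n → A ⊗[k] (A ⊗[k] A) := fun i j =>
      x i ⊗ₜ[k] (x j ⊗ₜ[k] m (y j) (y i))
      + x i ⊗ₜ[k] (m (x j) (y i) ⊗ₜ[k] y j)
      + m (x i) (y j) ⊗ₜ[k] (x j ⊗ₜ[k] y i) with hGterm
    have hS : (∑ i, ∑ j, Sterm i j) = 0 := by
      have h := congrArg (TensorProduct.leftComm k A A A) hAYBE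
      simpa [map_sum, hSterm] using h
    have hK : (∑ i, ∑ j, Kterm i j) = 0 := by
      rw [Finset.sum_comm]
      apply Finset.sum_eq_zero
      intro j _
      set ψ : (A ⊗[k] A) →ₗ[k] A ⊗[k] (A ⊗[k] A) :=
        (TensorProduct.assoc k A A A).toLinearMap
          ∘ₗ ((TensorProduct.mk k (A ⊗[k] A) A).flip (y j))
          ∘ₗ (TensorProduct.comm k A A).toLinearMap with hψ
      have h := congrArg ψ (hsyminv (x j))
      simpa [map_sum, hψ, TensorProduct.mk_apply, hKterm] using h
    have key : ∀ i j,
        br (x i) (x j) ⊗ₜ[k] (y i ⊗ₜ[k] y j)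
        + x i ⊗ₜ[k] (x j ⊗ₜ[k] br (y i) (y j))
        + x i ⊗ₜ[k] (br (y i) (x j) ⊗ₜ[k] y j)
        = Aterm i j - Sterm i j - Kterm i j + Gterm j i - Gterm i j := by
      intro i j
      simp only [hbr, hAterm, hSterm, hKterm, hGterm, TensorProduct.sub_tmul,
        TensorProduct.tmul_sub]
      abel
    calc (∑ i, ∑ j,
        (br (x i) (x j) ⊗ₜ[k] (y i ⊗ₜ[k] y j)
        + x i ⊗ₜ[k] (x j ⊗ₜ[k] br (y i) (y j))
        + x i ⊗ₜ[k] (br (y i) (x j) ⊗ₜ[k] y j)))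
        = ∑ i, ∑ j, (Aterm i j - Sterm i j - Kterm i j + Gterm j i - Gterm i j) :=
          Finset.sum_congr rfl fun i _ => Finset.sum_congr rfl fun j _ => key i j
      _ = (∑ i, ∑ j, Aterm i j) - (∑ i, ∑ j, Sterm i j) - (∑ i, ∑ j, Kterm i j)
          + (∑ i, ∑ j, Gterm j i) - (∑ i, ∑ j, Gterm i j) := by
          simp only [Finset.sum_sub_distrib, Finset.sum_add_distrib]
      _ = 0 := by
          rw [hAYBE, hS, hK, Finset.sum_comm (f := fun i j => Gterm j i)]
          simp
  · -- ad-invariance of r + τ(r)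
    intro a
    have H := hsyminv a
    have Hτ := congrArg (TensorProduct.comm k A A) H
    simp only [map_sum, map_sub, map_add, TensorProduct.comm_tmul] at Hτ
    have key : ∀ i,
        x i ⊗ₜ[k] br a (y i) + br a (x i) ⊗ₜ[k] y i
        + y i ⊗ₜ[k] br a (x i) + br a (y i) ⊗ₜ[k] x i
        = (x i ⊗ₜ[k] m a (y i) - m (x i) a ⊗ₜ[k] y i
            + y i ⊗ₜ[k] m a (x i) - m (y i) a ⊗ₜ[k] x i)
          + (m a (y i) ⊗ₜ[k] x i - y i ⊗ₜ[k] m (x i) a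
            + m a (x i) ⊗ₜ[k] y i - x i ⊗ₜ[k] m (y i) a) := by
      intro i
      simp only [hbr, TensorProduct.sub_tmul, TensorProduct.tmul_sub]
      abel
    calc (∑ i, (x i ⊗ₜ[k] br a (y i) + br a (x i) ⊗ₜ[k] y i
            + y i ⊗ₜ[k] br a (x i) + br a (y i) ⊗ₜ[k] x i))
        = (∑ i, (x i ⊗ₜ[k] m a (y i) - m (x i) a ⊗ₜ[k] y i
            + y i ⊗ₜ[k] m a (x i) - m (y i) a ⊗ₜ[k] x i))
          + (∑ i, (m a (y i) ⊗ₜ[k] x i - y i ⊗ₜ[k] m (x i) a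
            + m a (x i) ⊗ₜ[k] y i - x i ⊗ₜ[k] m (y i) a)) := by
          rw [← Finset.sum_add_distrib]
          exact Finset.sum_congr rfl fun i _ => key i
      _ = 0 := by rw [H, Hτ]; simp
end

section
/- Let (A, *) be an associative algebra and (A, [−,−]) its commutator Lie algebra. Every skew-symmetric solution r of the associative Yang-Baxter equation r12*r13 + r13*r23 − r23*r12 = 0 in (A, *) is also a skew-symmetric solution of the classical Yang-Baxter equation in (A, [−,−]). -/
open TensorProduct

noncomputable def sig13 (k A : Type*) [Field k] [AddCommGroup A] [Module k A] :
    A ⊗[k] (A ⊗[k] A) →ₗ[k] A ⊗[k] (A ⊗[k] A) :=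
  TensorProduct.lift (LinearMap.flip (TensorProduct.lift
    (LinearMap.mk₂ k
      (fun b c => (TensorProduct.mk k A (A ⊗[k] A) c).comp (TensorProduct.mk k A A b))
      (fun _ _ _ => by
        ext a
        simp only [LinearMap.comp_apply, LinearMap.add_apply, LinearMap.smul_apply,
          TensorProduct.mk_apply, TensorProduct.tmul_add, TensorProduct.add_tmul,
          ← TensorProduct.smul_tmul', TensorProduct.tmul_smul])
      (fun _ _ _ => by
        ext a
        simp only [LinearMap.comp_apply, LinearMap.add_apply, LinearMap.smul_apply,
          TensorProduct.mk_apply, TensorProduct.tmul_add, TensorProduct.add_tmul,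
          ← TensorProduct.smul_tmul', TensorProduct.tmul_smul])
      (fun _ _ _ => by
        ext a
        simp only [LinearMap.comp_apply, LinearMap.add_apply, LinearMap.smul_apply,
          TensorProduct.mk_apply, TensorProduct.tmul_add, TensorProduct.add_tmul,
          ← TensorProduct.smul_tmul', TensorProduct.tmul_smul])
      (fun _ _ _ => by
        ext a
        simp only [LinearMap.comp_apply, LinearMap.add_apply, LinearMap.smul_apply,
          TensorProduct.mk_apply, TensorProduct.tmul_add, TensorProduct.add_tmul,
          ← TensorProduct.smul_tmul', TensorProduct.tmul_smul]))))

@[simp] lemma sig13_tmul (k A : Type*) [Field k] [AddCommGroup A] [Module k A]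
    (a b c : A) : sig13 k A (a ⊗ₜ[k] (b ⊗ₜ[k] c)) = c ⊗ₜ[k] (b ⊗ₜ[k] a) := by
  simp [sig13]

lemma skew_pair {k A M : Type*} [Field k] [AddCommGroup A] [Module k A]
    [AddCommGroup M] [Module k M] {n : ℕ} {x y : Fin n → A}
    (hskew : (∑ i, x i ⊗ₜ[k] y i) = - ∑ i, y i ⊗ₜ[k] x i)
    (f : A →ₗ[k] A →ₗ[k] M) :
    ∑ i, f (x i) (y i) = - ∑ i, f (y i) (x i) := by
  have h := congrArg (TensorProduct.lift f) hskew
  simpa using h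

/-- every skew-symmetric solution of the associative Yang-Baxter
equation in `(A,*)` is a skew-symmetric solution of the classical Yang-Baxter
equation in the commutator Lie algebra `(A, [−,−])`. -/
theorem stmt13 (k A : Type*) [Field k] [AddCommGroup A] [Module k A]
    (m : A →ₗ[k] A →ₗ[k] A)
    (hassoc : ∀ a b c : A, m (m a b) c = m a (m b c))
    (br : A →ₗ[k] A →ₗ[k] A)
    (hbr : ∀ a b : A, br a b = m a b - m b a)
    (n : ℕ) (x y : Fin n → A)
    (hskew : (∑ i, x i ⊗ₜ[k] y i) = - ∑ i, y i ⊗ₜ[k] x i)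
    (hAYBE : (∑ i, ∑ j,
        (m (x i) (x j) ⊗ₜ[k] (y i ⊗ₜ[k] y j)
        + x i ⊗ₜ[k] (x j ⊗ₜ[k] m (y i) (y j))
        - x j ⊗ₜ[k] (m (x i) (y j) ⊗ₜ[k] y i))) = 0) :
    (∑ i, ∑ j,
        (br (x i) (x j) ⊗ₜ[k] (y i ⊗ₜ[k] y j)
        + x i ⊗ₜ[k] (x j ⊗ₜ[k] br (y i) (y j))
        + x i ⊗ₜ[k] (br (y i) (x j) ⊗ₜ[k] y j))) = 0 := by
  classical
  -- Step 1: apply the 1↔3 flip to the AYBE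
  have h0 := congrArg (sig13 k A) hAYBE
  simp only [map_sum, map_add, map_sub, map_zero, sig13_tmul] at h0
  -- h0 : ∑ i, ∑ j, (y j ⊗ (y i ⊗ m (x i) (x j)) + m (y i) (y j) ⊗ (x j ⊗ x i)
  --        - y i ⊗ (m (x i) (y j) ⊗ x j)) = 0
  -- Step 2: skew-swap in index i
  have h1 := skew_pair hskew (∑ j, LinearMap.mk₂ k
    (fun a b => y j ⊗ₜ[k] (b ⊗ₜ[k] m a (x j)) + m b (y j) ⊗ₜ[k] (x j ⊗ₜ[k] a)
        - b ⊗ₜ[k] (m a (y j) ⊗ₜ[k] x j))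
    (fun _ _ _ => by
      simp only [map_add, LinearMap.add_apply, TensorProduct.tmul_add,
        TensorProduct.add_tmul, TensorProduct.tmul_sub, TensorProduct.sub_tmul]
      abel)
    (fun _ _ _ => by
      simp only [map_smul, LinearMap.smul_apply, TensorProduct.tmul_smul,
        ← TensorProduct.smul_tmul', smul_add, smul_sub])
    (fun _ _ _ => by
      simp only [map_add, LinearMap.add_apply, TensorProduct.tmul_add,
        TensorProduct.add_tmul, TensorProduct.tmul_sub, TensorProduct.sub_tmul]
      abel)
    (fun _ _ _ => by
      simp only [map_smul, LinearMap.smul_apply, TensorProduct.tmul_smul,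
        ← TensorProduct.smul_tmul', smul_add, smul_sub]))
  simp only [LinearMap.sum_apply, LinearMap.mk₂_apply] at h1
  rw [h0] at h1
  replace h1 := (neg_eq_zero.mp h1.symm)
  -- h1 : ∑ i, ∑ j, (y j ⊗ (x i ⊗ m (y i) (x j)) + m (x i) (y j) ⊗ (x j ⊗ y i)
  --        - x i ⊗ (m (y i) (y j) ⊗ x j)) = 0
  rw [Finset.sum_comm] at h1
  -- Step 3: skew-swap in index j (now the outer index)
  have h2 := skew_pair hskew (∑ i, LinearMap.mk₂ k
    (fun a b => b ⊗ₜ[k] (x i ⊗ₜ[k] m (y i) a) + m (x i) b ⊗ₜ[k] (a ⊗ₜ[k] y i)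
        - x i ⊗ₜ[k] (m (y i) b ⊗ₜ[k] a))
    (fun _ _ _ => by
      simp only [map_add, LinearMap.add_apply, TensorProduct.tmul_add,
        TensorProduct.add_tmul, TensorProduct.tmul_sub, TensorProduct.sub_tmul]
      abel)
    (fun _ _ _ => by
      simp only [map_smul, LinearMap.smul_apply, TensorProduct.tmul_smul,
        ← TensorProduct.smul_tmul', smul_add, smul_sub])
    (fun _ _ _ => by
      simp only [map_add, LinearMap.add_apply, TensorProduct.tmul_add,
        TensorProduct.add_tmul, TensorProduct.tmul_sub, TensorProduct.sub_tmul]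
      abel)
    (fun _ _ _ => by
      simp only [map_smul, LinearMap.smul_apply, TensorProduct.tmul_smul,
        ← TensorProduct.smul_tmul', smul_add, smul_sub]))
  simp only [LinearMap.sum_apply, LinearMap.mk₂_apply] at h2
  rw [h1] at h2
  replace h2 := (neg_eq_zero.mp h2.symm)
  -- h2 (hKey) : ∑ a, ∑ b, (x a ⊗ (x b ⊗ m (y b) (y a)) + m (x b) (x a) ⊗ (y a ⊗ y b)
  --        - x b ⊗ (m (y b) (x a) ⊗ y a)) = 0
  -- Step 4: expand the goal and split into atomic double sums
  simp only [hbr, TensorProduct.tmul_sub, TensorProduct.sub_tmul]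
  simp only [Finset.sum_add_distrib, Finset.sum_sub_distrib] at h2 hAYBE ⊢
  -- align the two atoms that need an index swap
  rw [show (∑ a, ∑ b, x a ⊗ₜ[k] (m (y a) (x b) ⊗ₜ[k] y b))
        = ∑ a, ∑ b, x b ⊗ₜ[k] (m (y b) (x a) ⊗ₜ[k] y a) from Finset.sum_comm,
      show (∑ a, ∑ b, x a ⊗ₜ[k] (m (x b) (y a) ⊗ₜ[k] y b))
        = ∑ a, ∑ b, x b ⊗ₜ[k] (m (x a) (y b) ⊗ₜ[k] y a) from Finset.sum_comm]
  have hfinal := congrArg₂ (· - ·) hAYBE h2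
  simp only [sub_zero] at hfinal
  abel_nf at hfinal ⊢
  exact hfinal
end
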